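/- arXiv:0906.1496 — 4 statements merged into one kernel-verified Lean document; each statement's English description precedes it below -/
import Mathlib

section
/- Let R be an integral domain in which 2 is invertible, and let A be an R-algebra with a cell datum in the weak sense, i.e. with a basis {c^λ_{s,t}} satisfying i(c^λ_{s,t}) ≡ c^λ_{t,s} modulo the span Ǎ^λ of basis elements c^μ_{u,v} with μ > λ. Then A admits a new cellular basis {a^λ_{s,t}} with the same partially ordered set and index sets, satisfying the strict equality i(a^λ_{s,t}) = a^λ_{t,s} for all λ, s, t. Explicitly, writing i(c^λ_{s,t}) = c^λ_{t,s} + f(λ,s,t) with f(λ,s,t) ∈ Ǎ^λ, the elements a^λ_{s,t} = c^λ_{s,t} + (1/2) f(λ,t,s) form such a basis. -/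
/-- The span `Ǎ^λ` of the cell-basis elements `c^μ_{u,v}` with `μ > λ`. -/
def cellSpanAbove {R A : Type*} [CommRing R] [Ring A] [Algebra R A]
    {Λ : Type*} [PartialOrder Λ] {T : Λ → Type*}
    (c : ∀ l : Λ, T l → T l → A) (l : Λ) : Submodule R A :=
  Submodule.span R {x | ∃ μ, l < μ ∧ ∃ u v, x = c μ u v}

/-- Monotonicity of `cellSpanAbove`. -/
theorem cellSpanAbove_mono {R A : Type*} [CommRing R] [Ring A] [Algebra R A]
    {Λ : Type*} [PartialOrder Λ] {T : Λ → Type*}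
    (c : ∀ l : Λ, T l → T l → A) {l μ : Λ} (h : l < μ) :
    cellSpanAbove (R := R) c μ ≤ cellSpanAbove (R := R) c l := by
  apply Submodule.span_mono
  rintro x ⟨ν, hν, u, v, rfl⟩
  exact ⟨ν, h.trans hν, u, v, rfl⟩

/-- Let `R` be an integral domain in which `2` is invertible, and let `A` be an `R`-algebra
with a cell datum in the weak sense, i.e. a basis `{c^λ_{s,t}}` with
`i(c^λ_{s,t}) = c^λ_{t,s} + f(λ,s,t)` where `f(λ,s,t) ∈ Ǎ^λ`.  Then the elements
`a^λ_{s,t} = c^λ_{s,t} + (1/2) f(λ,t,s)` form a cellular basis with the same partially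
ordered set and index sets satisfying the strict equality `i(a^λ_{s,t}) = a^λ_{t,s}`. -/
theorem stmt_2 {R A : Type*} [CommRing R] [IsDomain R] [Ring A] [Algebra R A]
    [Invertible (2 : R)]
    {Λ : Type*} [PartialOrder Λ] [Fintype Λ]
    (T : Λ → Type*) [∀ l, Fintype (T l)]
    (ι : A →ₗ[R] A) (hanti : ∀ a b, ι (a * b) = ι b * ι a) (hone : ι 1 = 1)
    (hinvol : ∀ a, ι (ι a) = a)
    (c : ∀ l : Λ, T l → T l → A)
    (hind : LinearIndependent R (fun p : Σ l : Λ, T l × T l => c p.1 p.2.1 p.2.2))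
    (hspan : Submodule.span R
      (Set.range fun p : Σ l : Λ, T l × T l => c p.1 p.2.1 p.2.2) = ⊤)
    (hmul : ∀ (l : Λ) (s : T l) (x : A), ∃ r : T l → R, ∀ t : T l,
      x * c l s t - ∑ v, r v • c l v t ∈ cellSpanAbove (R := R) c l)
    (hideal : ∀ l : Λ, ∀ a : A, ∀ x ∈ cellSpanAbove (R := R) c l,
      a * x ∈ cellSpanAbove (R := R) c l ∧ x * a ∈ cellSpanAbove (R := R) c l)
    (hinvariant : ∀ l : Λ, ∀ x ∈ cellSpanAbove (R := R) c l,
      ι x ∈ cellSpanAbove (R := R) c l)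
    (f : ∀ l : Λ, T l → T l → A)
    (hf : ∀ l s t, f l s t ∈ cellSpanAbove (R := R) c l)
    (hdef : ∀ l s t, ι (c l s t) = c l t s + f l s t) :
    ∀ a : ∀ l : Λ, T l → T l → A,
      (∀ l s t, a l s t = c l s t + (⅟(2 : R)) • f l t s) →
      LinearIndependent R (fun p : Σ l : Λ, T l × T l => a p.1 p.2.1 p.2.2) ∧
      Submodule.span R
        (Set.range fun p : Σ l : Λ, T l × T l => a p.1 p.2.1 p.2.2) = ⊤ ∧
      (∀ l s t, ι (a l s t) = a l t s) ∧
      (∀ l : Λ, cellSpanAbove (R := R) a l = cellSpanAbove (R := R) c l) ∧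
      (∀ (l : Λ) (s : T l) (x : A), ∃ r : T l → R, ∀ t : T l,
        x * a l s t - ∑ v, r v • a l v t ∈ cellSpanAbove (R := R) a l) := by
  intro a ha
  -- `ι` negates `f` up to swapping indices
  have hιf : ∀ l (s t : T l), ι (f l s t) = - f l t s := by
    intro l s t
    have h1 : ι (ι (c l s t)) = c l s t := hinvol _
    rw [hdef, map_add, hdef] at h1
    have := congrArg (fun x => x - c l s t - f l t s) h1
    linear_combination (norm := abel) this
  have hc_of_a : ∀ l (s t : T l),
      c l s t = a l s t - (⅟(2 : R)) • f l t s := by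
    intro l s t; rw [ha]; abel
  -- the two filtrations agree
  have spanEq : ∀ l : Λ, cellSpanAbove (R := R) a l = cellSpanAbove (R := R) c l := by
    have wf : WellFounded ((· > ·) : Λ → Λ → Prop) := wellFounded_gt
    intro l
    induction l using wf.induction with
    | _ l ih =>
      apply le_antisymm
      · apply Submodule.span_le.2
        rintro x ⟨μ, hlt, u, v, rfl⟩
        rw [ha]
        exact Submodule.add_mem _ (Submodule.subset_span ⟨μ, hlt, u, v, rfl⟩)
          (Submodule.smul_mem _ _ (cellSpanAbove_mono c hlt (hf μ v u)))
      · apply Submodule.span_le.2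
        rintro x ⟨μ, hlt, u, v, rfl⟩
        rw [hc_of_a]
        refine Submodule.sub_mem _ (Submodule.subset_span ⟨μ, hlt, u, v, rfl⟩)
          (Submodule.smul_mem _ _ ?_)
        have hm : f μ v u ∈ cellSpanAbove (R := R) a μ := by
          rw [ih μ hlt]; exact hf μ v u
        exact cellSpanAbove_mono a hlt hm
  -- the `a` family spans
  have haboveA : ∀ l : Λ, cellSpanAbove (R := R) a l ≤
      Submodule.span R (Set.range fun p : Σ l : Λ, T l × T l => a p.1 p.2.1 p.2.2) := by
    intro l
    apply Submodule.span_le.2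
    rintro x ⟨μ, _, u, v, rfl⟩
    exact Submodule.subset_span ⟨⟨μ, u, v⟩, rfl⟩
  have hspan_a : Submodule.span R
      (Set.range fun p : Σ l : Λ, T l × T l => a p.1 p.2.1 p.2.2) = ⊤ := by
    rw [eq_top_iff, ← hspan]
    apply Submodule.span_le.2
    rintro x ⟨p, rfl⟩
    show c p.1 p.2.1 p.2.2 ∈ _
    rw [hc_of_a]
    refine Submodule.sub_mem _ (Submodule.subset_span ⟨p, rfl⟩)
      (Submodule.smul_mem _ _ (haboveA p.1 ?_))
    rw [spanEq]; exact hf _ _ _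
  -- linear independence via a surjective endomorphism of a finite module
  have hind_a : LinearIndependent R
      (fun p : Σ l : Λ, T l × T l => a p.1 p.2.1 p.2.2) := by
    let B : Module.Basis (Σ l : Λ, T l × T l) R A := Module.Basis.mk hind (by rw [hspan])
    haveI : Module.Finite R A := Module.Finite.of_basis B
    let φ : A →ₗ[R] A := B.constr R (fun p => a p.1 p.2.1 p.2.2)
    have hφB : ∀ p : Σ l : Λ, T l × T l, φ (c p.1 p.2.1 p.2.2) = a p.1 p.2.1 p.2.2 := by
      intro p
      have : φ (B p) = a p.1 p.2.1 p.2.2 := B.constr_basis _ _ _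
      rwa [Module.Basis.mk_apply] at this
    have hsurj : Function.Surjective φ := by
      rw [← LinearMap.range_eq_top, eq_top_iff, ← hspan_a]
      apply Submodule.span_le.2
      rintro x ⟨p, rfl⟩
      exact ⟨c p.1 p.2.1 p.2.2, hφB p⟩
    have hinj : Function.Injective φ :=
      OrzechProperty.injective_of_surjective_endomorphism φ hsurj
    have := hind.map' φ (LinearMap.ker_eq_bot.2 hinj)
    convert this using 1
    funext p
    exact (hφB p).symm
    all_goals rfl
  refine ⟨hind_a, hspan_a, ?_, spanEq, ?_⟩
  · -- strict invariance
    intro l s t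
    rw [ha, map_add, map_smul, hdef, hιf, ha, smul_neg]
    have h2 : f l s t - (⅟(2 : R)) • f l s t = (⅟(2 : R)) • f l s t := by
      rw [sub_eq_iff_eq_add, ← two_smul R, smul_smul, mul_invOf_self, one_smul]
    linear_combination (norm := abel) h2
  · -- the multiplication property
    intro l s x
    obtain ⟨r, hr⟩ := hmul l s x
    refine ⟨r, fun t => ?_⟩
    rw [spanEq]
    have key : x * a l s t - ∑ v, r v • a l v t =
        (x * c l s t - ∑ v, r v • c l v t) +
          ((⅟(2 : R)) • (x * f l t s) - ∑ v, r v • (⅟(2 : R)) • f l t v) := by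
      simp only [ha, mul_add, smul_add, Finset.sum_add_distrib, mul_smul_comm]
      abel
    rw [key]
    refine Submodule.add_mem _ (hr t) (Submodule.sub_mem _
      (Submodule.smul_mem _ _ (hideal l x _ (hf l t s)).1)
      (Submodule.sum_mem _ fun v _ =>
        Submodule.smul_mem _ _ (Submodule.smul_mem _ _ (hf l t v))))
end

section
/- Let R be an integral domain and A a unital R-algebra with involution i. An i-invariant two-sided ideal J of A is a split ideal (i.e. J ≅ Δ ⊗_R i(Δ) as A-A-bimodules, compatibly with the involutions, for some left ideal Δ ⊆ J finitely generated free over R) if and only if there exists a left A-module M that is finitely generated free as an R-module, together with an A-A-bimodule isomorphism γ: J → M ⊗_R i(M) satisfying γ ∘ i = i ∘ γ. -/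
universe u v

open scoped TensorProduct

section Aux

variable {R : Type u} [CommRing R] {M N : Type v} [AddCommGroup M] [AddCommGroup N]
  [Module R M] [Module R N]

/-- Conjugation by a linear equivalence as an algebra equivalence of endomorphism rings. -/
def conjAlgHom (e : M ≃ₗ[R] N) : Module.End R M →ₐ[R] Module.End R N where
  toFun g := e.conj g
  map_one' := by ext x; simp [LinearEquiv.conj_apply_apply]
  map_mul' f g := by ext x; simp [LinearEquiv.conj_apply_apply]
  map_zero' := by ext x; simp [LinearEquiv.conj_apply_apply]
  map_add' f g := by ext x; simp [LinearEquiv.conj_apply_apply]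
  commutes' r := by ext x; simp [LinearEquiv.conj_apply_apply, Module.algebraMap_end_apply]

theorem congr_map_left (e : M ≃ₗ[R] N) (g : Module.End R M) (z : TensorProduct R M M) :
    TensorProduct.congr e e (TensorProduct.map g LinearMap.id z) =
      TensorProduct.map (conjAlgHom e g) LinearMap.id (TensorProduct.congr e e z) := by
  induction z using TensorProduct.induction_on with
  | zero => simp
  | tmul m n => simp [conjAlgHom, LinearEquiv.conj_apply_apply]
  | add x y hx hy => simp [map_add, hx, hy]

theorem congr_map_right (e : M ≃ₗ[R] N) (g : Module.End R M) (z : TensorProduct R M M) :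
    TensorProduct.congr e e (TensorProduct.map LinearMap.id g z) =
      TensorProduct.map LinearMap.id (conjAlgHom e g) (TensorProduct.congr e e z) := by
  induction z using TensorProduct.induction_on with
  | zero => simp
  | tmul m n => simp [conjAlgHom, LinearEquiv.conj_apply_apply]
  | add x y hx hy => simp [map_add, hx, hy]

theorem congr_comm (e : M ≃ₗ[R] N) (z : TensorProduct R M M) :
    TensorProduct.congr e e (TensorProduct.comm R M M z) =
      TensorProduct.comm R N N (TensorProduct.congr e e z) := by
  induction z using TensorProduct.induction_on with
  | zero => simp
  | tmul m n => simp
  | add x y hx hy => simp [map_add, hx, hy]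

end Aux

/-- Let `R` be an integral domain and `A` a unital `R`-algebra with involution `ι`.  An
`ι`-invariant two-sided ideal `J` of `A` is a split ideal (i.e. `J ≅ Δ ⊗_R i(Δ)` as
`A`-`A`-bimodules compatibly with the involutions, for some left ideal `Δ ⊆ J` finitely
generated free over `R`) if and only if there is a left `A`-module `M`, finitely
generated free as an `R`-module, and an `A`-`A`-bimodule isomorphism
`γ : J → M ⊗_R i(M)` with `γ ∘ ι = ι ∘ γ`.  Here a left `A`-module is encoded by its
action map `ρ : A →ₐ[R] End_R M`; the left action of `a` on `M ⊗ i(M)` is `ρ a` on the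
first factor, the right action of `a` is `ρ (ι a)` on the second factor, and the
involution on `M ⊗_R i(M)` is the flip `x ⊗ i(y) ↦ y ⊗ i(x)`. -/
theorem stmt_4 {R : Type u} {A : Type v} [CommRing R] [IsDomain R] [Ring A] [Algebra R A]
    (ι : A →ₗ[R] A) (hanti : ∀ a b, ι (a * b) = ι b * ι a) (hone : ι 1 = 1)
    (hinvol : ∀ a, ι (ι a) = a)
    (J : Submodule R A)
    (hJl : ∀ a : A, ∀ x ∈ J, a * x ∈ J) (hJr : ∀ a : A, ∀ x ∈ J, x * a ∈ J)
    (hJi : ∀ x ∈ J, ι x ∈ J) :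
    (∃ Δ : Submodule R A, (∀ a : A, ∀ x ∈ Δ, a * x ∈ Δ) ∧ Δ ≤ J ∧
      Module.Finite R Δ ∧ Module.Free R Δ ∧
      ∃ ρ : A →ₐ[R] Module.End R Δ, (∀ (a : A) (m : Δ), ((ρ a m : Δ) : A) = a * (m : A)) ∧
      ∃ α : J ≃ₗ[R] TensorProduct R Δ Δ,
        (∀ (a : A) (x y : J), (y : A) = a * (x : A) →
          α y = TensorProduct.map (ρ a) LinearMap.id (α x)) ∧
        (∀ (a : A) (x y : J), (y : A) = (x : A) * a →
          α y = TensorProduct.map LinearMap.id (ρ (ι a)) (α x)) ∧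
        (∀ x y : J, (y : A) = ι (x : A) →
          α y = TensorProduct.comm R Δ Δ (α x)))
    ↔
    (∃ (M : Type v) (_ : AddCommGroup M), ∃ (_ : Module R M) (ρ : A →ₐ[R] Module.End R M),
      Module.Finite R M ∧ Module.Free R M ∧
      ∃ γ : J ≃ₗ[R] TensorProduct R M M,
        (∀ (a : A) (x y : J), (y : A) = a * (x : A) →
          γ y = TensorProduct.map (ρ a) LinearMap.id (γ x)) ∧
        (∀ (a : A) (x y : J), (y : A) = (x : A) * a →
          γ y = TensorProduct.map LinearMap.id (ρ (ι a)) (γ x)) ∧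
        (∀ x y : J, (y : A) = ι (x : A) →
          γ y = TensorProduct.comm R M M (γ x))) := by
  constructor
  · rintro ⟨Δ, hΔl, hΔJ, hfin, hfree, ρ, hρ, α, h1, h2, h3⟩
    exact ⟨Δ, inferInstance, inferInstance, ρ, hfin, hfree, α, h1, h2, h3⟩
  · rintro ⟨M, _, _, ρ, hfin, hfree, γ, h1, h2, h3⟩
    by_cases hM : Subsingleton M
    · -- degenerate case: `M = 0`, hence `J = 0`; take `Δ = ⊥`.
      have hTs : Subsingleton (TensorProduct R M M) := inferInstance
      have hJs : Subsingleton J := γ.toEquiv.subsingleton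
      have hbs : Subsingleton (⊥ : Submodule R A) := inferInstance
      have hts : Subsingleton (TensorProduct R (⊥ : Submodule R A) (⊥ : Submodule R A)) :=
        inferInstance
      have hends : Subsingleton (Module.End R (⊥ : Submodule R A)) := inferInstance
      refine ⟨⊥, by simp, bot_le, inferInstance, inferInstance,
        { toFun := fun _ => 1
          map_one' := rfl
          map_mul' := fun _ _ => Subsingleton.elim _ _
          map_zero' := Subsingleton.elim _ _
          map_add' := fun _ _ => Subsingleton.elim _ _
          commutes' := fun _ => Subsingleton.elim _ _ }, ?_,
        LinearEquiv.ofSubsingleton _ _,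
        fun _ _ _ _ => Subsingleton.elim _ _,
        fun _ _ _ _ => Subsingleton.elim _ _,
        fun _ _ _ => Subsingleton.elim _ _⟩
      · intro a m
        have hm : (m : A) = 0 := (Submodule.mem_bot R).mp m.2
        have hm2 : ((1 : Module.End R (⊥ : Submodule R A)) m : A) = 0 :=
          (Submodule.mem_bot R).mp ((1 : Module.End R (⊥ : Submodule R A)) m).2
        simp [hm, hm2]
    · have : Nontrivial M := not_subsingleton_iff_nontrivial.mp hM
      let b := Module.Free.chooseBasis R M
      obtain ⟨i₀⟩ := b.index_nonempty
      -- the map `m ↦ m ⊗ (b i₀)`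
      let t : M →ₗ[R] TensorProduct R M M := (TensorProduct.mk R M M).flip (b i₀)
      have ht : Function.Injective t := by
        have : Function.LeftInverse
            ((TensorProduct.rid R M).toLinearMap ∘ₗ
              TensorProduct.map LinearMap.id (b.coord i₀)) t := by
          intro m
          simp [t, TensorProduct.mk_apply, Module.Basis.coord_apply]
        exact this.injective
      let f : M →ₗ[R] A := J.subtype ∘ₗ (γ.symm.toLinearMap ∘ₗ t)
      have hf : Function.Injective f :=
        J.injective_subtype.comp (γ.symm.injective.comp ht)
      -- key multiplication identity
      have key : ∀ (a : A) (m : M), a * f m = f (ρ a m) := by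
        intro a m
        set x : J := γ.symm (t m) with hx
        have hxA : (x : A) = f m := rfl
        have hyJ : a * (x : A) ∈ J := hJl a x x.2
        have := h1 a x ⟨a * (x : A), hyJ⟩ rfl
        have hγx : γ x = t m := by simp [hx]
        rw [hγx] at this
        have htm : TensorProduct.map (ρ a) LinearMap.id (t m) = t (ρ a m) := by
          simp [t, TensorProduct.mk_apply]
        rw [htm] at this
        have : (⟨a * (x : A), hyJ⟩ : J) = γ.symm (t (ρ a m)) := by
          apply γ.injective; simp [this]
        have := congrArg (Subtype.val) this
        simpa [hxA, f] using this
      refine ⟨LinearMap.range f, ?_, ?_, ?_, ?_, ?_⟩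
      · rintro a x ⟨m, rfl⟩
        exact ⟨ρ a m, (key a m).symm⟩
      · rintro x ⟨m, rfl⟩
        exact (γ.symm (t m)).2
      · exact Module.Finite.equiv (LinearEquiv.ofInjective f hf)
      · exact Module.Free.of_equiv (LinearEquiv.ofInjective f hf)
      · set e : M ≃ₗ[R] LinearMap.range f := LinearEquiv.ofInjective f hf with he
        refine ⟨(conjAlgHom e).comp ρ, ?_, γ.trans (TensorProduct.congr e e), ?_, ?_, ?_⟩
        · intro a m
          have hem : ∀ m' : M, ((e m' : LinearMap.range f) : A) = f m' := fun m' => rfl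
          have h0 : ((conjAlgHom e).comp ρ) a m = e (ρ a (e.symm m)) := rfl
          rw [h0, hem, ← key]
          congr 1
          rw [← hem (e.symm m), e.apply_symm_apply]
        · intro a x y hxy
          have := h1 a x y hxy
          simp only [LinearEquiv.trans_apply, this]
          have := congr_map_left e (ρ a) (γ x)
          simpa using this
        · intro a x y hxy
          have := h2 a x y hxy
          simp only [LinearEquiv.trans_apply, this]
          have := congr_map_right e (ρ (ι a)) (γ x)
          simpa using this
        · intro x y hxy
          have := h3 x y hxy
          simp only [LinearEquiv.trans_apply, this]
          have := congr_comm e (γ x)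
          simpa using this
end

section
/- Let R be an integral domain with field of fractions F, A a unital R-algebra such that A ⊗_R F is semisimple, P a right A-module, and N₁ ⊆ N₂ left A-modules such that N₂ and P ⊗_A N₁ are free R-modules. Then id_P ⊗ ι : P ⊗_A N₁ → P ⊗_A N₂ is injective, where ι: N₁ → N₂ is the inclusion. -/
universe u

open scoped TensorProduct

section Aux

variable {R F A M : Type u} [CommRing R] [CommRing F] [Algebra R F]
  [Ring A] [Algebra R A]
  [AddCommGroup M] [Module R M] [Module A M] [IsScalarTower R A M] [SMulCommClass A R M]

/-- The `A`-action on `F ⊗[R] M` through the right factor, as a ring hom into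
endomorphisms. -/
noncomputable def auxEndHom : A →+* Module.End R (F ⊗[R] M) where
  toFun a := (DistribMulAction.toLinearMap R M a).lTensor F
  map_one' := TensorProduct.ext' fun f m => by simp [DistribMulAction.toLinearMap, DistribSMul.toLinearMap_apply]
  map_mul' a b := TensorProduct.ext' fun f m => by
    simp [Module.End.mul_apply, mul_smul, DistribMulAction.toLinearMap, DistribSMul.toLinearMap_apply]
  map_zero' := TensorProduct.ext' fun f m => by simp [DistribMulAction.toLinearMap, DistribSMul.toLinearMap_apply]
  map_add' a b := TensorProduct.ext' fun f m => by
    simp [LinearMap.add_apply, add_smul, TensorProduct.tmul_add, DistribMulAction.toLinearMap, DistribSMul.toLinearMap_apply]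

/-- The `A`-module structure on `F ⊗[R] M` through the right factor. -/
noncomputable def auxAModule : Module A (F ⊗[R] M) :=
  Module.compHom _ (auxEndHom (R := R) (F := F) (A := A) (M := M))

attribute [local instance] auxAModule

lemma aux_smul_tmul (a : A) (f : F) (m : M) :
    a • (f ⊗ₜ[R] m) = f ⊗ₜ[R] (a • m) := rfl

/-- `R` acts compatibly with the auxiliary `A`-action. -/
def auxTower : IsScalarTower R A (F ⊗[R] M) where
  smul_assoc r a z := by
    have h : (DistribMulAction.toLinearMap R M (r • a)) =
        r • DistribMulAction.toLinearMap R M a :=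
      LinearMap.ext fun m => smul_assoc r a m
    show (DistribMulAction.toLinearMap R M (r • a)).lTensor F z
      = r • (DistribMulAction.toLinearMap R M a).lTensor F z
    rw [h, LinearMap.lTensor_smul]
    rfl

/-- The `F`-action commutes with the auxiliary `A`-action. -/
def auxComm : SMulCommClass F A (F ⊗[R] M) where
  smul_comm f a z := by
    induction z using TensorProduct.induction_on with
    | zero => simp
    | tmul f' m =>
      rw [aux_smul_tmul, TensorProduct.smul_tmul', TensorProduct.smul_tmul',
        aux_smul_tmul]
    | add z w hz hw => rw [smul_add, smul_add, hz, hw, smul_add, smul_add]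

end Aux

set_option maxHeartbeats 1000000 in
/-- Let `R` be an integral domain with field of fractions `F`, and `A` a unital
`R`-algebra such that `A^F = F ⊗[R] A` is semisimple.  Let `P` be a right `A`-module and
`N₁ ⊆ N₂` left `A`-modules such that `N₂` and `P ⊗_A N₁` are free `R`-modules.  Present
`T₁ = P ⊗_A N₁` and `T₂ = P ⊗_A N₂` by their universal `A`-balanced `R`-bilinear maps.
Then the induced map `id_P ⊗ ι : P ⊗_A N₁ → P ⊗_A N₂` is injective. -/
theorem stmt_9 {R : Type u} [CommRing R] [IsDomain R]
    (F : Type u) [Field F] [Algebra R F] [IsFractionRing R F]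
    {A : Type u} [Ring A] [Algebra R A]
    [IsSemisimpleRing (F ⊗[R] A)]
    (P : Type u) [AddCommGroup P] [Module R P]
    [Module Aᵐᵒᵖ P] [IsScalarTower R Aᵐᵒᵖ P] [SMulCommClass Aᵐᵒᵖ R P]
    (N₂ : Type u) [AddCommGroup N₂] [Module R N₂] [Module.Free R N₂]
    [Module A N₂] [IsScalarTower R A N₂] [SMulCommClass A R N₂]
    (N₁ : Submodule R N₂) (hN₁ : ∀ a : A, ∀ y ∈ N₁, a • y ∈ N₁)
    (T₁ : Type u) [AddCommGroup T₁] [Module R T₁] [Module.Free R T₁]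
    (t₁ : P →ₗ[R] ↥N₁ →ₗ[R] T₁)
    (hbal₁ : ∀ (x : P) (a : A) (y z : ↥N₁), (z : N₂) = a • (y : N₂) →
      t₁ (MulOpposite.op a • x) y = t₁ x z)
    (huniv₁ : ∀ (W : Type u) [AddCommGroup W] [Module R W] (g : P →ₗ[R] ↥N₁ →ₗ[R] W),
      (∀ (x : P) (a : A) (y z : ↥N₁), (z : N₂) = a • (y : N₂) →
        g (MulOpposite.op a • x) y = g x z) →
      ∃! G : T₁ →ₗ[R] W, ∀ x y, G (t₁ x y) = g x y)
    (T₂ : Type u) [AddCommGroup T₂] [Module R T₂]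
    (t₂ : P →ₗ[R] N₂ →ₗ[R] T₂)
    (hbal₂ : ∀ (x : P) (a : A) (y : N₂), t₂ (MulOpposite.op a • x) y = t₂ x (a • y))
    (huniv₂ : ∀ (W : Type u) [AddCommGroup W] [Module R W] (g : P →ₗ[R] N₂ →ₗ[R] W),
      (∀ (x : P) (a : A) (y : N₂), g (MulOpposite.op a • x) y = g x (a • y)) →
      ∃! G : T₂ →ₗ[R] W, ∀ x y, G (t₂ x y) = g x y)
    (G : T₁ →ₗ[R] T₂)
    (hG : ∀ (x : P) (y : ↥N₁), G (t₁ x y) = t₂ x (y : N₂)) :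
    Function.Injective G := by
  classical
  -- `A`-module structure on `N₁`
  letI : SMul A ↥N₁ := ⟨fun a y => ⟨a • (y : N₂), hN₁ a y y.2⟩⟩
  have coeA : ∀ (a : A) (y : ↥N₁), ((a • y : ↥N₁) : N₂) = a • (y : N₂) := fun _ _ => rfl
  letI : Module A ↥N₁ :=
    { one_smul := fun y => Subtype.ext (by rw [coeA, one_smul])
      mul_smul := fun a b y => Subtype.ext (by simp only [coeA, mul_smul])
      smul_zero := fun a => Subtype.ext (by
        simp only [coeA, ZeroMemClass.coe_zero, smul_zero])
      smul_add := fun a y z => Subtype.ext (by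
        simp only [coeA, Submodule.coe_add, smul_add])
      add_smul := fun a b y => Subtype.ext (by
        simp only [coeA, Submodule.coe_add, add_smul])
      zero_smul := fun y => Subtype.ext (by
        simp only [coeA, zero_smul, ZeroMemClass.coe_zero]) }
  letI : IsScalarTower R A ↥N₁ :=
    ⟨fun r a y => Subtype.ext (by
      simp only [coeA, SetLike.val_smul]
      exact smul_assoc r a (y : N₂))⟩
  letI : SMulCommClass A R ↥N₁ :=
    ⟨fun a r y => Subtype.ext (by
      simp only [coeA, SetLike.val_smul]
      exact smul_comm a r (y : N₂))⟩
  -- auxiliary module structures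
  letI : Module A (F ⊗[R] ↥N₁) := auxAModule
  letI : IsScalarTower R A (F ⊗[R] ↥N₁) := auxTower
  letI : SMulCommClass F A (F ⊗[R] ↥N₁) := auxComm
  letI : Module A (F ⊗[R] N₂) := auxAModule
  letI : IsScalarTower R A (F ⊗[R] N₂) := auxTower
  letI : SMulCommClass F A (F ⊗[R] N₂) := auxComm
  letI : Module (F ⊗[R] A) (F ⊗[R] ↥N₁) := TensorProduct.Algebra.module
  letI : Module (F ⊗[R] A) (F ⊗[R] N₂) := TensorProduct.Algebra.module
  letI : Module.Flat R F := IsLocalization.flat F (nonZeroDivisors R)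
  -- the base-changed inclusion
  set j : F ⊗[R] ↥N₁ →ₗ[R] F ⊗[R] N₂ := (N₁.subtype).lTensor F with hj_def
  have hj : Function.Injective j :=
    Module.Flat.lTensor_preserves_injective_linearMap _ N₁.injective_subtype
  have hjA : ∀ (a : A) (z : F ⊗[R] ↥N₁), j (a • z) = a • j z := by
    intro a z
    induction z using TensorProduct.induction_on with
    | zero => simp
    | tmul f y =>
      rw [aux_smul_tmul]
      simp only [hj_def, LinearMap.lTensor_tmul]
      simp only [Submodule.subtype_apply, coeA]
      exact (aux_smul_tmul a f (y : N₂)).symm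
    | add z w hz hw => rw [smul_add, map_add, hz, hw, map_add, smul_add]
  have hjF : ∀ (f : F) (z : F ⊗[R] ↥N₁), j (f • z) = f • j z := by
    intro f z
    induction z using TensorProduct.induction_on with
    | zero => simp
    | tmul f' y =>
      rw [TensorProduct.smul_tmul']
      simp only [hj_def, LinearMap.lTensor_tmul, TensorProduct.smul_tmul']
    | add z w hz hw => rw [smul_add, map_add, hz, hw, map_add, smul_add]
  -- its `F ⊗[R] A`-linear version
  set jB : (F ⊗[R] ↥N₁) →ₗ[F ⊗[R] A] (F ⊗[R] N₂) :=
    { toFun := j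
      map_add' := j.map_add
      map_smul' := by
        intro b z
        simp only [RingHom.id_apply]
        induction b using TensorProduct.induction_on with
        | zero => rw [zero_smul, zero_smul, map_zero]
        | tmul f a =>
          have h1 : (f ⊗ₜ[R] a) • z = f • (a • z) := TensorProduct.Algebra.smul_def f a z
          have h2 : (f ⊗ₜ[R] a) • j z = f • (a • j z) := TensorProduct.Algebra.smul_def f a (j z)
          rw [h1, h2, hjF, hjA]
        | add b₁ b₂ h₁ h₂ => rw [add_smul, add_smul, map_add, h₁, h₂] } with hjB_def
  have hjBinj : Function.Injective jB := hj
  -- semisimplicity: a retraction of `jB`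
  obtain ⟨q, hq⟩ := exists_isCompl (LinearMap.range jB)
  set pr := Submodule.linearProjOfIsCompl _ q hq with hpr_def
  set e := LinearEquiv.ofInjective jB hjBinj with he_def
  set π : (F ⊗[R] N₂) →ₗ[F ⊗[R] A] (F ⊗[R] ↥N₁) := e.symm.toLinearMap ∘ₗ pr with hπ_def
  have hπj : ∀ z, π (jB z) = z := by
    intro z
    have h1 : pr (jB z) = ⟨jB z, LinearMap.mem_range_self _ z⟩ :=
      Submodule.linearProjOfIsCompl_apply_left hq ⟨jB z, LinearMap.mem_range_self _ z⟩
    have h2 : e z = ⟨jB z, LinearMap.mem_range_self _ z⟩ :=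
      Subtype.ext (by rw [LinearEquiv.ofInjective_apply])
    show e.symm (pr (jB z)) = z
    rw [h1, ← h2, LinearEquiv.symm_apply_apply]
  have hπA : ∀ (a : A) (z : F ⊗[R] N₂), π (a • z) = a • π z := by
    intro a z
    have h := π.map_smul ((1 : F) ⊗ₜ[R] a) z
    have e₂ : ((1 : F) ⊗ₜ[R] a) • z = a • z := by
      rw [TensorProduct.Algebra.smul_def, one_smul]
    have e₁ : ((1 : F) ⊗ₜ[R] a) • π z = a • π z := by
      rw [TensorProduct.Algebra.smul_def, one_smul]
    rw [e₂, e₁] at h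
    exact h
  have hπF : ∀ (f : F) (z : F ⊗[R] N₂), π (f • z) = f • π z := by
    intro f z
    have h := π.map_smul (f ⊗ₜ[R] (1 : A)) z
    have e₂ : (f ⊗ₜ[R] (1 : A)) • z = f • z := by
      rw [TensorProduct.Algebra.smul_def, one_smul]
    have e₁ : (f ⊗ₜ[R] (1 : A)) • π z = f • π z := by
      rw [TensorProduct.Algebra.smul_def, one_smul]
    rw [e₂, e₁] at h
    exact h
  have hπR : ∀ (r : R) (z : F ⊗[R] N₂), π (r • z) = r • π z := by
    intro r z
    rw [← algebraMap_smul F r z, hπF, algebraMap_smul]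
  set πR : F ⊗[R] N₂ →ₗ[R] F ⊗[R] ↥N₁ :=
    { toFun := π
      map_add' := π.map_add
      map_smul' := hπR } with hπR_def
  -- the balanced bilinear map into `F ⊗[R] T₁`
  set g : P →ₗ[R] N₂ →ₗ[R] F ⊗[R] T₁ :=
    { toFun := fun x =>
        (((t₁ x).baseChange F).restrictScalars R).comp
          (πR.comp (TensorProduct.mk R F N₂ 1))
      map_add' := fun x x' => LinearMap.ext fun y => by
        simp [map_add, LinearMap.baseChange_add]
      map_smul' := fun r x => LinearMap.ext fun y => by
        simp [map_smul, LinearMap.baseChange_smul] } with hg_def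
  have hkey : ∀ (x : P) (a : A) (z : F ⊗[R] ↥N₁),
      (t₁ (MulOpposite.op a • x)).baseChange F z = (t₁ x).baseChange F (a • z) := by
    intro x a z
    induction z using TensorProduct.induction_on with
    | zero => simp
    | tmul f y =>
      rw [aux_smul_tmul, LinearMap.baseChange_tmul, LinearMap.baseChange_tmul,
        hbal₁ x a y (a • y) rfl]
    | add z w hz hw => rw [smul_add, map_add, hz, hw, map_add]
  have hgbal : ∀ (x : P) (a : A) (y : N₂),
      g (MulOpposite.op a • x) y = g x (a • y) := by
    intro x a y
    show (t₁ (MulOpposite.op a • x)).baseChange F (πR ((1 : F) ⊗ₜ[R] y))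
      = (t₁ x).baseChange F (πR ((1 : F) ⊗ₜ[R] (a • y)))
    have h1 : (1 : F) ⊗ₜ[R] (a • y) = a • ((1 : F) ⊗ₜ[R] y) := (aux_smul_tmul a 1 y).symm
    have h2 : πR (a • ((1 : F) ⊗ₜ[R] y)) = a • πR ((1 : F) ⊗ₜ[R] y) := hπA a _
    rw [h1, h2, hkey]
  obtain ⟨H, hH, -⟩ := huniv₂ (F ⊗[R] T₁) g hgbal
  -- the canonical injection `T₁ → F ⊗[R] T₁`
  set εL : T₁ →ₗ[R] F ⊗[R] T₁ := TensorProduct.mk R F T₁ 1 with hε_def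
  obtain ⟨G', hG'1, hG'uniq⟩ := huniv₁ (F ⊗[R] T₁) (t₁.compr₂ εL)
    (fun x a y z hz => by
      simp only [LinearMap.compr₂_apply]
      rw [hbal₁ x a y z hz])
  have hHG : H ∘ₗ G = εL := by
    have h1 : H ∘ₗ G = G' := hG'uniq _ (fun x y => by
      rw [LinearMap.comp_apply, hG, hH]
      show (t₁ x).baseChange F (πR ((1 : F) ⊗ₜ[R] (y : N₂))) = (t₁.compr₂ εL) x y
      have h2 : (1 : F) ⊗ₜ[R] (y : N₂) = jB ((1 : F) ⊗ₜ[R] y) := by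
        simp [hjB_def, hj_def]
      have h3 : πR ((1 : F) ⊗ₜ[R] (y : N₂)) = (1 : F) ⊗ₜ[R] y := by
        rw [h2]; exact hπj _
      rw [h3, LinearMap.baseChange_tmul]
      simp [hε_def])
    have h2 : εL = G' := hG'uniq _ (fun x y => by simp [hε_def])
    rw [h1, h2]
  have hεinj : Function.Injective εL := by
    have hinj := Module.Flat.rTensor_preserves_injective_linearMap (M := T₁)
      (Algebra.linearMap R F) (IsFractionRing.injective R F)
    have hcomp : ∀ w : T₁,
        (Algebra.linearMap R F).rTensor T₁ ((TensorProduct.lid R T₁).symm w) = εL w := by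
      intro w
      simp [TensorProduct.lid_symm_apply, hε_def]
    intro u v huv
    apply (TensorProduct.lid R T₁).symm.injective
    apply hinj
    rw [hcomp, hcomp, huv]
  intro u v huv
  apply hεinj
  calc εL u = H (G u) := by rw [← hHG]; rfl
  _ = H (G v) := by rw [huv]
  _ = εL v := by rw [← hHG]; rfl
end

section
/- Let A be an algebra over an integral domain R with involution, and let (Λ, ≥) be a finite partially ordered set. Then A has a cell datum with partially ordered set Λ if and only if A has a Λ-cell net, i.e. an order-ideal-indexed family of i-invariant two-sided ideals Γ ↦ A_Γ such that: A_∅ = 0; Γ₁ ⊆ Γ₂ implies A_{Γ₁} ⊆ A_{Γ₂}; A is spanned by the A_{≥μ} and A_{>λ} is spanned by the A_{≥μ} with μ > λ; and for each λ there is an A-module M^λ, finitely generated free over R, such that whenever Γ ⊆ Γ' are order ideals with Γ' \ Γ = {λ}, there is an A-A-bimodule isomorphism α: A_{Γ'}/A_Γ → M^λ ⊗_R i(M^λ) with i ∘ α = α ∘ i. -/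
universe u v

open scoped TensorProduct

/-- A left `A`-module, finitely presented by its `R`-module carrier together with the
action map `ρ : A →ₐ[R] End_R M`. -/
structure ModWithAction (R A : Type u) [CommRing R] [Ring A] [Algebra R A] :
    Type (u + 1) where
  M : Type u
  [grp : AddCommGroup M]
  [mod : Module R M]
  ρ : A →ₐ[R] Module.End R M

attribute [instance] ModWithAction.grp ModWithAction.mod

set_option linter.unusedSectionVars false
set_option linter.unnecessarySimpa false
set_option maxHeartbeats 1600000
set_option linter.unusedSectionVars false
set_option maxHeartbeats 800000


theorem sum_single_one_smul {R : Type*} [CommRing R] {ι : Type*} [Fintype ι] [DecidableEq ι]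
    {M : Type*} [AddCommMonoid M] [Module R M] (s : ι) (x : ι → M) :
    ∑ v, ((Pi.single s (1 : R) : ι → R) v) • x v = x s := by
  simp [Pi.single_apply, ite_smul, Finset.sum_ite_eq]

theorem sum_smul_single_one {R : Type*} [CommRing R] {ι : Type*} [Fintype ι] [DecidableEq ι]
    (f : ι → R) : ∑ v, f v • (Pi.single v (1 : R) : ι → R) = f := by
  funext w
  simp [Finset.sum_apply, Pi.single_apply, mul_ite, Finset.sum_ite_eq]

namespace Stmt18Aux

variable {R A : Type u} [CommRing R] [Ring A] [Algebra R A]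
variable {Λ : Type v} [PartialOrder Λ]
variable {T : Λ → Type u}

/-- The cell basis as a family indexed by a sigma type. -/
def cc (c : ∀ l : Λ, T l → T l → A) : (Σ l : Λ, T l × T l) → A :=
  fun p => c p.1 p.2.1 p.2.2

variable (R) in
/-- The span of the cell basis elements with indices in `Γ`. -/
def NN (c : ∀ l : Λ, T l → T l → A) (Γ : Set Λ) : Submodule R A :=
  Submodule.span R (cc c '' {p | p.1 ∈ Γ})

variable (R) in
theorem Hset (c : ∀ l : Λ, T l → T l → A) (l : Λ) :
    Submodule.span R {x | ∃ μ, l < μ ∧ ∃ u v, x = c μ u v} = NN R c (Set.Ioi l) := by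
  unfold NN
  congr 1
  ext x
  constructor
  · rintro ⟨μ, hμ, u, v, rfl⟩
    exact ⟨⟨μ, u, v⟩, hμ, rfl⟩
  · rintro ⟨⟨μ, u, v⟩, hμ, rfl⟩
    exact ⟨μ, hμ, u, v, rfl⟩

theorem cc_mem_NN (c : ∀ l : Λ, T l → T l → A) {Γ : Set Λ} {l : Λ} (hl : l ∈ Γ)
    (s t : T l) : c l s t ∈ NN R c Γ :=
  Submodule.subset_span ⟨⟨l, s, t⟩, hl, rfl⟩

theorem NN_mono (c : ∀ l : Λ, T l → T l → A) {Γ₁ Γ₂ : Set Λ} (h : Γ₁ ⊆ Γ₂) :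
    NN R c Γ₁ ≤ NN R c Γ₂ :=
  Submodule.span_mono (Set.image_mono fun _ hp => h hp)

theorem NN_empty (c : ∀ l : Λ, T l → T l → A) : NN R c (∅ : Set Λ) = ⊥ := by
  unfold NN
  have : (cc c '' {p : Σ l : Λ, T l × T l | p.1 ∈ (∅ : Set Λ)}) = ∅ := by
    simp [Set.eq_empty_iff_forall_notMem]
  rw [this, Submodule.span_empty]

section Hyps

variable [∀ l, Fintype (T l)] (c : ∀ l : Λ, T l → T l → A) (ι : A →ₗ[R] A)
variable (hmul : ∀ (l : Λ) (s : T l) (a : A), ∃ r : T l → R, ∀ t : T l,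
    a * c l s t - ∑ v, r v • c l v t ∈ NN R c (Set.Ioi l))
variable (hiota : ∀ (l : Λ) (s t : T l),
    ι (c l s t) - c l t s ∈ NN R c (Set.Ioi l))

include hmul in
theorem NN_mul_left {Γ : Set Λ} (hΓ : IsUpperSet Γ) (a : A) :
    ∀ x ∈ NN R c Γ, a * x ∈ NN R c Γ := by
  intro x hx
  induction hx using Submodule.span_induction with
  | mem y hy =>
    obtain ⟨⟨l, s, t⟩, hl, rfl⟩ := hy
    obtain ⟨r, hr⟩ := hmul l s a
    have h1 : a * c l s t - ∑ v, r v • c l v t ∈ NN R c Γ := by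
      refine SetLike.le_def.mp ?_ (hr t)
      exact NN_mono c fun μ hμ => hΓ (le_of_lt hμ) hl
    have h2 : (∑ v, r v • c l v t) ∈ NN R c Γ :=
      Submodule.sum_mem _ fun v _ => Submodule.smul_mem _ _ (cc_mem_NN c hl v t)
    have := Submodule.add_mem _ h1 h2
    simpa [cc] using this
  | zero => simpa using Submodule.zero_mem _
  | add y z _ _ hy hz => rw [mul_add]; exact Submodule.add_mem _ hy hz
  | smul r y _ hy => rw [mul_smul_comm]; exact Submodule.smul_mem _ _ hy

include hiota in
theorem NN_iota {Γ : Set Λ} (hΓ : IsUpperSet Γ) :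
    ∀ x ∈ NN R c Γ, ι x ∈ NN R c Γ := by
  intro x hx
  induction hx using Submodule.span_induction with
  | mem y hy =>
    obtain ⟨⟨l, s, t⟩, hl, rfl⟩ := hy
    have h1 : ι (c l s t) - c l t s ∈ NN R c Γ := by
      refine SetLike.le_def.mp ?_ (hiota l s t)
      exact NN_mono c fun μ hμ => hΓ (le_of_lt hμ) hl
    have h2 : c l t s ∈ NN R c Γ := cc_mem_NN c hl t s
    have := Submodule.add_mem _ h1 h2
    simpa [cc] using this
  | zero => simpa using Submodule.zero_mem _
  | add y z _ _ hy hz => rw [map_add]; exact Submodule.add_mem _ hy hz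
  | smul r y _ hy => rw [map_smul]; exact Submodule.smul_mem _ _ hy

end Hyps

end Stmt18Aux

section Unique

variable {R A : Type u} [CommRing R] [Ring A] [Algebra R A]
variable {Λ : Type v} [PartialOrder Λ]
variable {T : Λ → Type u}
variable {c : ∀ l : Λ, T l → T l → A}

namespace Stmt18Aux
variable (hli : LinearIndependent R (Stmt18Aux.cc c))

include hli in
theorem coeff_zero {l : Λ} [Fintype (T l)] {q : T l → R}
    (hq : ∀ t, (∑ v, q v • c l v t) ∈ NN R c (Set.Ioi l)) : q = 0 := by
  funext u
  have t := u
  have h1 : (∑ v, q v • c l v t) ∈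
      Submodule.span R (cc c '' {p : Σ l : Λ, T l × T l | p.1 ∈ Set.Ioi l}) := hq t
  have h2 : (∑ v, q v • c l v t) ∈
      Submodule.span R (cc c '' {p : Σ l : Λ, T l × T l | p.1 = l}) :=
    Submodule.sum_mem _ fun v _ =>
      Submodule.smul_mem _ _ (Submodule.subset_span ⟨⟨l, v, t⟩, rfl, rfl⟩)
  have hdisj : Disjoint {p : Σ l : Λ, T l × T l | p.1 = l}
      {p : Σ l : Λ, T l × T l | p.1 ∈ Set.Ioi l} := by
    rw [Set.disjoint_left]
    rintro p (hp : p.1 = l) (hp2 : l < p.1)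
    rw [hp] at hp2
    exact lt_irrefl l hp2
  have h0 : (∑ v, q v • c l v t) = 0 :=
    Submodule.disjoint_def.mp (hli.disjoint_span_image hdisj) _ h2 h1
  have hinj : Function.Injective (fun v : T l => (⟨l, v, t⟩ : Σ l : Λ, T l × T l)) := by
    intro v w h
    simpa using h
  exact (Fintype.linearIndependent_iff.mp (hli.comp _ hinj)) q h0 u

include hli in
theorem coeff_eq {l : Λ} [Fintype (T l)] {a : A} {s : T l} {q q' : T l → R}
    (hq : ∀ t, a * c l s t - ∑ v, q v • c l v t ∈ NN R c (Set.Ioi l))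
    (hq' : ∀ t, a * c l s t - ∑ v, q' v • c l v t ∈ NN R c (Set.Ioi l)) : q = q' := by
  have key : ∀ t, (∑ v, (q - q') v • c l v t) ∈ NN R c (Set.Ioi l) := by
    intro t
    have h := Submodule.sub_mem _ (hq' t) (hq t)
    have e : (a * c l s t - ∑ v, q' v • c l v t) - (a * c l s t - ∑ v, q v • c l v t)
        = ∑ v, (q - q') v • c l v t := by
      rw [sub_sub_sub_cancel_left, ← Finset.sum_sub_distrib]
      congr 1
      funext v
      rw [Pi.sub_apply, sub_smul]
    rwa [e] at h
  have := coeff_zero hli key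
  exact sub_eq_zero.mp this

end Stmt18Aux

end Unique

section Rho

variable {R A : Type u} [CommRing R] [Ring A] [Algebra R A]
variable {Λ : Type v} [PartialOrder Λ]
variable {T : Λ → Type u}
variable {c : ∀ l : Λ, T l → T l → A}

namespace Stmt18Aux

variable [∀ l, Fintype (T l)]

theorem exists_rho (hli : LinearIndependent R (cc c))
    (hmul : ∀ (l : Λ) (s : T l) (a : A), ∃ r : T l → R, ∀ t : T l,
      a * c l s t - ∑ v, r v • c l v t ∈ NN R c (Set.Ioi l))
    (l : Λ) [DecidableEq (T l)] :
    ∃ ρ : A →ₐ[R] Module.End R (T l → R), ∀ (a : A) (s : T l) (t : T l),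
      a * c l s t - ∑ v, (ρ a (Pi.single s 1) : T l → R) v • c l v t ∈ NN R c (Set.Ioi l) := by
  obtain ⟨r, hr⟩ : ∃ r : T l → A → (T l → R), ∀ (s : T l) (a : A) (t : T l),
      a * c l s t - ∑ v, r s a v • c l v t ∈ NN R c (Set.Ioi l) := by
    have h := fun (s : T l) (a : A) => hmul l s a
    choose r hr using h
    exact ⟨r, hr⟩
  -- the r-laws
  have ra : ∀ (s : T l) (a b : A), r s (a + b) = r s a + r s b := by
    intro s a b
    refine coeff_eq hli (hr s (a + b)) (fun t => ?_)
    have h := Submodule.add_mem _ (hr s a t) (hr s b t)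
    have e : (a * c l s t - ∑ v, r s a v • c l v t) + (b * c l s t - ∑ v, r s b v • c l v t)
        = (a + b) * c l s t - ∑ v, (r s a + r s b) v • c l v t := by
      simp only [Pi.add_apply, add_smul, Finset.sum_add_distrib, add_mul]
      abel
    rwa [e] at h
  have rsm : ∀ (s : T l) (x : R) (a : A), r s (x • a) = x • r s a := by
    intro s x a
    refine coeff_eq hli (hr s (x • a)) (fun t => ?_)
    have h := Submodule.smul_mem _ x (hr s a t)
    have e : x • (a * c l s t - ∑ v, r s a v • c l v t)
        = (x • a) * c l s t - ∑ v, (x • r s a) v • c l v t := by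
      rw [smul_sub, Finset.smul_sum, smul_mul_assoc]
      congr 1
      refine Finset.sum_congr rfl fun v _ => ?_
      rw [Pi.smul_apply, smul_smul, smul_eq_mul]
    rwa [e] at h
  have r1 : ∀ s : T l, r s (1 : A) = Pi.single s 1 := by
    intro s
    refine coeff_eq hli (hr s 1) (fun t => ?_)
    have e : (1 : A) * c l s t - ∑ v, (Pi.single s (1 : R) : T l → R) v • c l v t = 0 := by
      rw [one_mul, sum_single_one_smul, sub_self]
    rw [e]
    exact Submodule.zero_mem _
  have ralg : ∀ (s : T l) (x : R), r s (algebraMap R A x) = x • (Pi.single s 1 : T l → R) := by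
    intro s x
    refine coeff_eq hli (hr s _) (fun t => ?_)
    have e : (algebraMap R A x) * c l s t
        - ∑ v, (x • (Pi.single s 1 : T l → R)) v • c l v t = 0 := by
      have h2 : ∑ v, (x • (Pi.single s 1 : T l → R)) v • c l v t
          = x • ∑ v, (Pi.single s (1 : R) : T l → R) v • c l v t := by
        rw [Finset.smul_sum]
        refine Finset.sum_congr rfl fun v _ => ?_
        rw [Pi.smul_apply, smul_smul, smul_eq_mul]
      rw [h2, sum_single_one_smul, ← Algebra.smul_def, sub_self]
    rw [e]
    exact Submodule.zero_mem _
  have rm : ∀ (s : T l) (a b : A), r s (a * b) = ∑ v, r s b v • r v a := by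
    intro s a b
    refine coeff_eq hli (hr s (a * b)) (fun t => ?_)
    -- (a*b) * c l s t - ∑ w (∑ v, r s b v • r v a) w • c l w t ∈ H
    have key : (a * b) * c l s t - ∑ w, (∑ v, r s b v • r v a) w • c l w t
        = a * (b * c l s t - ∑ v, r s b v • c l v t)
          + ∑ v, r s b v • (a * c l v t - ∑ w, r v a w • c l w t) := by
      rw [mul_sub, mul_assoc]
      rw [Finset.mul_sum]
      have e1 : ∀ v, a * (r s b v • c l v t) = r s b v • (a * c l v t) := fun v =>
        (mul_smul_comm _ _ _)
      simp only [e1, smul_sub, Finset.sum_sub_distrib]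
      have e2 : ∑ v, r s b v • ∑ w, r v a w • c l w t
          = ∑ w, (∑ v, r s b v • r v a) w • c l w t := by
        simp only [Finset.smul_sum, smul_smul]
        rw [Finset.sum_comm]
        refine Finset.sum_congr rfl fun w _ => ?_
        rw [Finset.sum_apply, Finset.sum_smul]
        refine Finset.sum_congr rfl fun v _ => ?_
        rw [Pi.smul_apply, smul_eq_mul]
      rw [e2]
      abel
    rw [key]
    refine Submodule.add_mem _ ?_ ?_
    · exact NN_mul_left c hmul (isUpperSet_Ioi l) a _ (hr s b t)
    · exact Submodule.sum_mem _ fun v _ => Submodule.smul_mem _ _ (hr v a t)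
  -- build the algebra homomorphism
  let g : A → Module.End R (T l → R) := fun a =>
    { toFun := fun f => ∑ v, f v • r v a
      map_add' := by
        intro f f'
        simp only [Pi.add_apply, add_smul, Finset.sum_add_distrib]
      map_smul' := by
        intro x f
        simp only [Pi.smul_apply, smul_eq_mul, RingHom.id_apply, mul_smul, Finset.smul_sum] }
  have gapp : ∀ (a : A) (f : T l → R), g a f = ∑ v, f v • r v a := fun a f => rfl
  have gsingle : ∀ (a : A) (s : T l), g a (Pi.single s 1) = r s a := by
    intro a s
    rw [gapp]
    exact sum_single_one_smul s (fun v => r v a)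
  let G : A →ₗ[R] Module.End R (T l → R) :=
    { toFun := g
      map_add' := by
        intro a b
        apply LinearMap.ext
        intro f
        show g (a + b) f = g a f + g b f
        simp only [gapp, ra, smul_add, Finset.sum_add_distrib]
      map_smul' := by
        intro x a
        apply LinearMap.ext
        intro f
        show g (x • a) f = x • g a f
        simp only [gapp, rsm, Finset.smul_sum]
        refine Finset.sum_congr rfl fun v _ => ?_
        rw [smul_comm] }
  have hG1 : G 1 = 1 := by
    apply LinearMap.ext
    intro f
    show g 1 f = f
    simp only [gapp, r1]
    exact sum_smul_single_one f
  have hGm : ∀ a b : A, G (a * b) = G a * G b := by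
    intro a b
    apply LinearMap.ext
    intro f
    show g (a * b) f = g a (g b f)
    simp only [gapp, rm]
    simp only [Finset.smul_sum, Finset.sum_apply, Pi.smul_apply, smul_eq_mul,
      Finset.sum_smul, smul_smul]
    rw [Finset.sum_comm]
  refine ⟨AlgHom.ofLinearMap G hG1 hGm, ?_⟩
  intro a s t
  have : (AlgHom.ofLinearMap G hG1 hGm) a (Pi.single s 1) = r s a := gsingle a s
  rw [this]
  exact hr s a t

end Stmt18Aux

end Rho

section Misc

variable {R A : Type u} [CommRing R] [Ring A] [Algebra R A]
variable {Λ : Type v} [PartialOrder Λ]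
variable {T : Λ → Type u}

namespace Stmt18Aux

variable (c : ∀ l : Λ, T l → T l → A)

theorem NN_iSup_top (hspan : Submodule.span R (Set.range (cc c)) = ⊤) :
    (⨆ μ : Λ, NN R c (Set.Ici μ)) = ⊤ := by
  refine le_antisymm le_top ?_
  rw [← hspan]
  refine Submodule.span_le.mpr ?_
  rintro x ⟨p, rfl⟩
  exact Submodule.mem_iSup_of_mem p.1 (cc_mem_NN c le_rfl p.2.1 p.2.2)

theorem NN_Ioi_eq (l : Λ) :
    NN R c (Set.Ioi l) = ⨆ μ ∈ Set.Ioi l, NN R c (Set.Ici μ) := by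
  refine le_antisymm ?_ ?_
  · refine Submodule.span_le.mpr ?_
    rintro x ⟨⟨μ, u, v⟩, (hμ : l < μ), rfl⟩
    exact Submodule.mem_iSup_of_mem μ
      (Submodule.mem_iSup_of_mem hμ (cc_mem_NN c le_rfl u v))
  · refine iSup_le fun μ => iSup_le fun hμ => ?_
    exact NN_mono c fun x hx => lt_of_lt_of_le hμ hx

variable (ι : A →ₗ[R] A)
variable [∀ l, Fintype (T l)]
variable (hanti : ∀ a b, ι (a * b) = ι b * ι a) (hinvol : ∀ a, ι (ι a) = a)
variable (hmul : ∀ (l : Λ) (s : T l) (a : A), ∃ r : T l → R, ∀ t : T l,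
    a * c l s t - ∑ v, r v • c l v t ∈ NN R c (Set.Ioi l))
variable (hiota : ∀ (l : Λ) (s t : T l),
    ι (c l s t) - c l t s ∈ NN R c (Set.Ioi l))

include hanti hinvol hmul hiota in
theorem NN_mul_right {Γ : Set Λ} (hΓ : IsUpperSet Γ) (a : A) :
    ∀ x ∈ NN R c Γ, x * a ∈ NN R c Γ := by
  intro x hx
  have e : x * a = ι (ι a * ι x) := by rw [hanti, hinvol, hinvol]
  rw [e]
  exact NN_iota c ι hiota hΓ _ (NN_mul_left c hmul hΓ _ _ (NN_iota c ι hiota hΓ x hx))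

end Stmt18Aux

end Misc

section Juggle

variable {R : Type u} [CommRing R] {τ : Type u} [Fintype τ]
variable {M : Type*} [AddCommMonoid M] [Module R M]

theorem sumJuggle1 (h : τ × τ → R) (q : τ → τ → R) (x : τ → τ → M) :
    ∑ st : τ × τ, h st • (∑ w, q st.1 w • x w st.2)
      = ∑ wt : τ × τ, (∑ s, h (s, wt.2) * q s wt.1) • x wt.1 wt.2 := by
  rw [Fintype.sum_prod_type, Fintype.sum_prod_type]
  simp only [Finset.smul_sum, smul_smul, Finset.sum_smul]
  -- LHS: ∑ s ∑ t ∑ w (h (s,t) * q s w) • x w t ; RHS: ∑ w ∑ t ∑ s same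
  refine (Finset.sum_comm).trans ?_
  refine (Finset.sum_congr rfl fun t _ => Finset.sum_comm).trans ?_
  exact Finset.sum_comm

theorem sumJuggle2 (h : τ × τ → R) (q : τ → τ → R) (x : τ → τ → M) :
    ∑ st : τ × τ, h st • (∑ w, q st.2 w • x st.1 w)
      = ∑ sw : τ × τ, (∑ t, h (sw.1, t) * q t sw.2) • x sw.1 sw.2 := by
  rw [Fintype.sum_prod_type, Fintype.sum_prod_type]
  simp only [Finset.smul_sum, smul_smul, Finset.sum_smul]
  refine Finset.sum_congr rfl fun s _ => ?_
  exact Finset.sum_comm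

theorem sumJuggle3 (h : τ × τ → R) (x : τ → τ → M) :
    ∑ st : τ × τ, h st • x st.2 st.1 = ∑ ts : τ × τ, h (ts.2, ts.1) • x ts.1 ts.2 := by
  rw [Fintype.sum_prod_type, Fintype.sum_prod_type]
  exact Finset.sum_comm

end Juggle



section Alpha

variable {R A : Type u} [CommRing R] [Ring A] [Algebra R A]
variable {Λ : Type v} [PartialOrder Λ]
variable {T : Λ → Type u} [∀ l, Fintype (T l)]
variable {c : ∀ l : Λ, T l → T l → A} {ι : A →ₗ[R] A}

namespace Stmt18Aux

theorem exists_W1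
    (hli : LinearIndependent R (cc c))
    (hanti : ∀ a b, ι (a * b) = ι b * ι a) (hinvol : ∀ a, ι (ι a) = a)
    (hmul : ∀ (l : Λ) (s : T l) (a : A), ∃ r : T l → R, ∀ t : T l,
      a * c l s t - ∑ v, r v • c l v t ∈ NN R c (Set.Ioi l))
    (hiota : ∀ (l : Λ) (s t : T l), ι (c l s t) - c l t s ∈ NN R c (Set.Ioi l))
    (l : Λ) :
    ∃ W : ModWithAction R A, Module.Finite R W.M ∧ Module.Free R W.M ∧
      ∀ Γ Γ' : Set Λ, IsUpperSet Γ → IsUpperSet Γ' → Γ ⊆ Γ' → Γ' \ Γ = {l} →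
        ∃ α : (↥(NN R c Γ') ⧸ Submodule.comap (NN R c Γ').subtype (NN R c Γ)) ≃ₗ[R]
            TensorProduct R W.M W.M,
          (∀ (a : A) (x y : ↥(NN R c Γ')), (y : A) = a * (x : A) →
            α (Submodule.Quotient.mk y)
              = TensorProduct.map (W.ρ a) LinearMap.id (α (Submodule.Quotient.mk x))) ∧
          (∀ (a : A) (x y : ↥(NN R c Γ')), (y : A) = (x : A) * a →
            α (Submodule.Quotient.mk y)
              = TensorProduct.map LinearMap.id (W.ρ (ι a)) (α (Submodule.Quotient.mk x))) ∧
          (∀ x y : ↥(NN R c Γ'), (y : A) = ι (x : A) →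
            α (Submodule.Quotient.mk y)
              = TensorProduct.comm R W.M W.M (α (Submodule.Quotient.mk x))) := by
  classical
  obtain ⟨ρ, hrho⟩ := exists_rho hli hmul l
  set rr : A → T l → T l → R := fun a s => ρ a (Pi.single s 1) with hrrdef
  refine ⟨ModWithAction.mk (T l → R) ρ, inferInstance, inferInstance, ?_⟩
  have hrho' : ∀ (a : A) (s t : T l),
      a * c l s t - ∑ v, rr a s v • c l v t ∈ NN R c (Set.Ioi l) := fun a s t => hrho a s t
  -- right multiplication coefficients
  have hH : ∀ (a : A) (s t : T l),
      c l s t * a - ∑ w, rr (ι a) t w • c l s w ∈ NN R c (Set.Ioi l) := by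
    intro a s t
    have hup := isUpperSet_Ioi l
    have A1 := NN_iota c ι hiota hup _ (hrho' (ι a) t s)
    have A2 := NN_mul_right c ι hanti hinvol hmul hiota hup a _ (hiota l t s)
    have A3 : ∑ w, rr (ι a) t w • (ι (c l w s) - c l s w) ∈ NN R c (Set.Ioi l) :=
      Submodule.sum_mem _ fun w _ => Submodule.smul_mem _ _ (hiota l w s)
    have key : c l s t * a - ∑ w, rr (ι a) t w • c l s w
        = ι (ι a * c l t s - ∑ w, rr (ι a) t w • c l w s)
          - (ι (c l t s) - c l s t) * a + ∑ w, rr (ι a) t w • (ι (c l w s) - c l s w) := by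
      rw [map_sub, hanti, hinvol, map_sum]
      simp only [map_smul, smul_sub, sub_mul, Finset.sum_sub_distrib]
      abel
    rw [key]
    exact Submodule.add_mem _ (Submodule.sub_mem _ A1 A2) A3
  intro Γ Γ' hΓ hΓ' hss hd
  have hldiff : l ∈ Γ' \ Γ := by rw [hd]; exact rfl
  have hlΓ' : l ∈ Γ' := hldiff.1
  have hlΓ : l ∉ Γ := hldiff.2
  have hIoi : Set.Ioi l ⊆ Γ := by
    intro x hx
    by_contra hxΓ
    have hxΓ' : x ∈ Γ' := hΓ' (le_of_lt hx) hlΓ'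
    have hmem : x ∈ Γ' \ Γ := ⟨hxΓ', hxΓ⟩
    rw [hd] at hmem
    exact lt_irrefl l (by rwa [hmem] at hx)
  have hHsub : NN R c (Set.Ioi l) ≤ NN R c Γ := NN_mono c hIoi
  have hsub : ∀ μ ∈ Γ', μ ∈ Γ ∨ μ = l := by
    intro μ hμ
    by_cases h : μ ∈ Γ
    · exact Or.inl h
    · have hmem : μ ∈ Γ' \ Γ := ⟨hμ, h⟩
      rw [hd] at hmem
      exact Or.inr hmem
  set b : Module.Basis (T l) R (T l → R) := Pi.basisFun R (T l) with hb
  set Bt : Module.Basis (T l × T l) R ((T l → R) ⊗[R] (T l → R)) := b.tensorProduct b with hBt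
  have cmem : ∀ s t : T l, c l s t ∈ NN R c Γ' := fun s t => cc_mem_NN c hlΓ' s t
  set Qp : Submodule R ↥(NN R c Γ') :=
    Submodule.comap (NN R c Γ').subtype (NN R c Γ) with hQp
  set mkc : T l × T l → (↥(NN R c Γ') ⧸ Qp) :=
    fun st => Submodule.Quotient.mk ⟨c l st.1 st.2, cmem st.1 st.2⟩ with hmkc
  set β : ((T l → R) ⊗[R] (T l → R)) →ₗ[R] (↥(NN R c Γ') ⧸ Qp) := Bt.constr R mkc with hβdef
  have hβb : ∀ st, β (Bt st) = mkc st := fun st => Bt.constr_basis R mkc st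
  have smem : ∀ h : T l × T l → R, (∑ st : T l × T l, h st • c l st.1 st.2) ∈ NN R c Γ' :=
    fun h => Submodule.sum_mem _ fun st _ => Submodule.smul_mem _ _ (cmem _ _)
  have subsum : ∀ h : T l × T l → R,
      (⟨∑ st : T l × T l, h st • c l st.1 st.2, smem h⟩ : ↥(NN R c Γ'))
        = ∑ st : T l × T l, h st • (⟨c l st.1 st.2, cmem st.1 st.2⟩ : ↥(NN R c Γ')) := by
    intro h
    apply Subtype.ext
    simp
  have BS : ∀ h : T l × T l → R,
      β (∑ st : T l × T l, h st • Bt st)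
        = Submodule.Quotient.mk ⟨∑ st : T l × T l, h st • c l st.1 st.2, smem h⟩ := by
    intro h
    rw [map_sum]
    simp only [map_smul, hβb]
    rw [subsum h, ← Submodule.mkQ_apply, map_sum]
    simp only [map_smul, Submodule.mkQ_apply]
    rfl
  have hsurj : Function.Surjective β := by
    intro q
    obtain ⟨⟨x, hx⟩, rfl⟩ := Submodule.Quotient.mk_surjective _ q
    induction hx using Submodule.span_induction with
    | mem y hy =>
      obtain ⟨⟨μ, u, v⟩, hμ, rfl⟩ := hy
      rcases hsub μ hμ with h | h
      · refine ⟨0, ?_⟩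
        rw [map_zero]
        symm
        rw [Submodule.Quotient.mk_eq_zero]
        exact cc_mem_NN c h u v
      · subst h
        exact ⟨Bt (u, v), hβb (u, v)⟩
    | zero =>
      refine ⟨0, ?_⟩
      rw [map_zero]
      symm
      rw [Submodule.Quotient.mk_eq_zero]
      exact Submodule.zero_mem _
    | add y z hy hz ihy ihz =>
      obtain ⟨zy, hzy⟩ := ihy
      obtain ⟨zz, hzz⟩ := ihz
      refine ⟨zy + zz, ?_⟩
      rw [map_add, hzy, hzz]
      rfl
    | smul r y hy ihy =>
      obtain ⟨zy, hzy⟩ := ihy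
      refine ⟨r • zy, ?_⟩
      rw [map_smul, hzy]
      rfl
  have hinj : Function.Injective β := by
    rw [← LinearMap.ker_eq_bot]
    refine (Submodule.eq_bot_iff _).mpr fun z hz => ?_
    rw [LinearMap.mem_ker] at hz
    have hrep : z = ∑ st : T l × T l, Bt.repr z st • Bt st := (Bt.sum_repr z).symm
    rw [hrep, BS] at hz
    rw [Submodule.Quotient.mk_eq_zero, hQp, Submodule.mem_comap] at hz
    have hz' : (∑ st : T l × T l, Bt.repr z st • c l st.1 st.2) ∈
        Submodule.span R (cc c '' {p : Σ l : Λ, T l × T l | p.1 ∈ Γ}) := hz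
    have hz2 : (∑ st : T l × T l, Bt.repr z st • c l st.1 st.2) ∈
        Submodule.span R (cc c '' {p : Σ l : Λ, T l × T l | p.1 = l}) :=
      Submodule.sum_mem _ fun st _ =>
        Submodule.smul_mem _ _ (Submodule.subset_span ⟨⟨l, st.1, st.2⟩, rfl, rfl⟩)
    have hdisj : Disjoint {p : Σ l : Λ, T l × T l | p.1 = l}
        {p : Σ l : Λ, T l × T l | p.1 ∈ Γ} := by
      rw [Set.disjoint_left]
      rintro p (hp : p.1 = l) (hp2 : p.1 ∈ Γ)
      rw [hp] at hp2
      exact hlΓ hp2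
    have h0 : (∑ st : T l × T l, Bt.repr z st • c l st.1 st.2) = 0 :=
      Submodule.disjoint_def.mp (hli.disjoint_span_image hdisj) _ hz2 hz'
    have hinj2 : Function.Injective
        (fun st : T l × T l => (⟨l, st⟩ : Σ l : Λ, T l × T l)) := by
      intro st st' h
      simpa using h
    have hcoef : ∀ st : T l × T l, Bt.repr z st = 0 := by
      intro st
      refine (Fintype.linearIndependent_iff.mp (hli.comp _ hinj2)) _ ?_ st
      exact h0
    rw [hrep]
    simp only [hcoef, zero_smul, Finset.sum_const_zero]
  set e := LinearEquiv.ofBijective β ⟨hinj, hsurj⟩ with hedef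
  have heβ : ∀ z, e z = β z := fun z => rfl
  have hαβ : ∀ z, e.symm (β z) = z := by
    intro z
    rw [← heβ]
    exact e.symm_apply_apply z
  have hβα : ∀ q, β (e.symm q) = q := by
    intro q
    rw [← heβ]
    exact e.apply_symm_apply q
  have TT : ∀ (x : ↥(NN R c Γ')) (h : T l × T l → R),
      ((x : A) - ∑ st : T l × T l, h st • c l st.1 st.2 ∈ NN R c Γ) →
      e.symm (Submodule.Quotient.mk x) = ∑ st : T l × T l, h st • Bt st := by
    intro x h hx
    have h1 : β (∑ st : T l × T l, h st • Bt st) = Submodule.Quotient.mk x := by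
      rw [BS, Submodule.Quotient.eq]
      show ((NN R c Γ').subtype
          ((⟨∑ st : T l × T l, h st • c l st.1 st.2, smem h⟩ - x : ↥(NN R c Γ'))))
          ∈ NN R c Γ
      have hval : ((NN R c Γ').subtype
            ((⟨∑ st : T l × T l, h st • c l st.1 st.2, smem h⟩ - x : ↥(NN R c Γ'))))
          = -(((x : A)) - ∑ st : T l × T l, h st • c l st.1 st.2) := by
        simp [sub_eq_add_neg, add_comm]
      rw [hval]
      exact Submodule.neg_mem _ hx
    rw [← h1, hαβ]
  have TT' : ∀ x : ↥(NN R c Γ'),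
      (x : A) - ∑ st : T l × T l,
          (Bt.repr (e.symm (Submodule.Quotient.mk x)) st) • c l st.1 st.2 ∈ NN R c Γ := by
    intro x
    have h1 : β (∑ st : T l × T l,
        (Bt.repr (e.symm (Submodule.Quotient.mk x)) st) • Bt st) = Submodule.Quotient.mk x :=
      (congrArg (fun z => β z) (Bt.sum_repr _)).trans (hβα _)
    have h1' := (BS (fun st => Bt.repr (e.symm (Submodule.Quotient.mk x)) st)).symm.trans h1
    have h2 := (Submodule.Quotient.eq Qp).mp h1'
    have h2' : ((NN R c Γ').subtype
        ((⟨_, smem (fun st => Bt.repr (e.symm (Submodule.Quotient.mk x)) st)⟩ - x :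
          ↥(NN R c Γ')))) ∈ NN R c Γ := h2
    have hval : ((NN R c Γ').subtype
          ((⟨_, smem (fun st => Bt.repr (e.symm (Submodule.Quotient.mk x)) st)⟩ - x :
            ↥(NN R c Γ'))))
        = -(((x : A)) - ∑ st : T l × T l,
            (Bt.repr (e.symm (Submodule.Quotient.mk x)) st) • c l st.1 st.2) := by
      simp [sub_eq_add_neg, add_comm]
    rw [hval] at h2'
    have := Submodule.neg_mem _ h2'
    rwa [neg_neg] at this
  refine ⟨e.symm, ?_, ?_, ?_⟩
  · -- left action
    intro a x y hy
    set h : T l × T l → R := fun st => Bt.repr (e.symm (Submodule.Quotient.mk x)) st with hhdef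
    have hx := TT' x
    have step1 : (y : A) - ∑ st : T l × T l, h st • (a * c l st.1 st.2) ∈ NN R c Γ := by
      have hm := NN_mul_left c hmul hΓ a _ hx
      have key : a * ((x : A) - ∑ st : T l × T l, h st • c l st.1 st.2)
          = (y : A) - ∑ st : T l × T l, h st • (a * c l st.1 st.2) := by
        rw [hy, mul_sub, Finset.mul_sum]
        congr 1
        refine Finset.sum_congr rfl fun st _ => ?_
        rw [mul_smul_comm]
      rwa [key] at hm
    have step2 : (y : A) - ∑ st : T l × T l,
        h st • (∑ w, rr a st.1 w • c l w st.2) ∈ NN R c Γ := by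
      have hdiffmem : ∑ st : T l × T l,
          h st • ((a * c l st.1 st.2) - ∑ w, rr a st.1 w • c l w st.2) ∈ NN R c Γ :=
        Submodule.sum_mem _ fun st _ =>
          Submodule.smul_mem _ _ (hHsub (hrho' a st.1 st.2))
      have key : (y : A) - ∑ st : T l × T l, h st • (∑ w, rr a st.1 w • c l w st.2)
          = ((y : A) - ∑ st : T l × T l, h st • (a * c l st.1 st.2))
            + ∑ st : T l × T l,
              h st • ((a * c l st.1 st.2) - ∑ w, rr a st.1 w • c l w st.2) := by
        simp only [smul_sub, Finset.sum_sub_distrib]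
        abel
      rw [key]
      exact Submodule.add_mem _ step1 hdiffmem
    rw [sumJuggle1 h (rr a) (fun w t => c l w t)] at step2
    rw [TT y _ step2]
    have hαx : e.symm (Submodule.Quotient.mk x) = ∑ st : T l × T l, h st • Bt st :=
      (Bt.sum_repr _).symm
    rw [hαx, map_sum]
    simp only [map_smul]
    have hmap : ∀ st : T l × T l,
        TensorProduct.map ((ModWithAction.mk (T l → R) ρ).ρ a) LinearMap.id (Bt st)
          = ∑ w, rr a st.1 w • Bt (w, st.2) := by
      rintro ⟨s, t⟩
      show TensorProduct.map (ρ a) LinearMap.id (Bt (s, t)) = _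
      rw [hBt, Module.Basis.tensorProduct_apply, TensorProduct.map_tmul]
      have hρb : ρ a (b s) = ∑ w, rr a s w • b w := by
        simp only [hb, Pi.basisFun_apply]
        exact (sum_smul_single_one (rr a s)).symm
      rw [hρb, TensorProduct.sum_tmul]
      refine Finset.sum_congr rfl fun w _ => ?_
      rw [← TensorProduct.smul_tmul']
      simp
    simp only [hmap]
    exact (sumJuggle1 h (rr a) (fun w t => Bt (w, t))).symm
  · -- right action
    intro a x y hy
    set h : T l × T l → R := fun st => Bt.repr (e.symm (Submodule.Quotient.mk x)) st with hhdef
    have hx := TT' x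
    have step1 : (y : A) - ∑ st : T l × T l, h st • (c l st.1 st.2 * a) ∈ NN R c Γ := by
      have hm := NN_mul_right c ι hanti hinvol hmul hiota hΓ a _ hx
      have key : ((x : A) - ∑ st : T l × T l, h st • c l st.1 st.2) * a
          = (y : A) - ∑ st : T l × T l, h st • (c l st.1 st.2 * a) := by
        rw [hy, sub_mul, Finset.sum_mul]
        congr 1
        refine Finset.sum_congr rfl fun st _ => ?_
        rw [smul_mul_assoc]
      rwa [key] at hm
    have step2 : (y : A) - ∑ st : T l × T l,
        h st • (∑ w, rr (ι a) st.2 w • c l st.1 w) ∈ NN R c Γ := by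
      have hdiffmem : ∑ st : T l × T l,
          h st • ((c l st.1 st.2 * a) - ∑ w, rr (ι a) st.2 w • c l st.1 w) ∈ NN R c Γ :=
        Submodule.sum_mem _ fun st _ =>
          Submodule.smul_mem _ _ (hHsub (hH a st.1 st.2))
      have key : (y : A) - ∑ st : T l × T l, h st • (∑ w, rr (ι a) st.2 w • c l st.1 w)
          = ((y : A) - ∑ st : T l × T l, h st • (c l st.1 st.2 * a))
            + ∑ st : T l × T l,
              h st • ((c l st.1 st.2 * a) - ∑ w, rr (ι a) st.2 w • c l st.1 w) := by
        simp only [smul_sub, Finset.sum_sub_distrib]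
        abel
      rw [key]
      exact Submodule.add_mem _ step1 hdiffmem
    rw [sumJuggle2 h (rr (ι a)) (fun s w => c l s w)] at step2
    rw [TT y _ step2]
    have hαx : e.symm (Submodule.Quotient.mk x) = ∑ st : T l × T l, h st • Bt st :=
      (Bt.sum_repr _).symm
    rw [hαx, map_sum]
    simp only [map_smul]
    have hmap : ∀ st : T l × T l,
        TensorProduct.map LinearMap.id ((ModWithAction.mk (T l → R) ρ).ρ (ι a)) (Bt st)
          = ∑ w, rr (ι a) st.2 w • Bt (st.1, w) := by
      rintro ⟨s, t⟩
      show TensorProduct.map LinearMap.id (ρ (ι a)) (Bt (s, t)) = _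
      rw [hBt, Module.Basis.tensorProduct_apply, TensorProduct.map_tmul]
      have hρb : ρ (ι a) (b t) = ∑ w, rr (ι a) t w • b w := by
        simp only [hb, Pi.basisFun_apply]
        exact (sum_smul_single_one (rr (ι a) t)).symm
      rw [hρb, TensorProduct.tmul_sum]
      refine Finset.sum_congr rfl fun w _ => ?_
      rw [TensorProduct.tmul_smul, Module.Basis.tensorProduct_apply, LinearMap.id_apply]
    simp only [hmap]
    exact (sumJuggle2 h (rr (ι a)) (fun s w => Bt (s, w))).symm
  · -- involution
    intro x y hy
    set h : T l × T l → R := fun st => Bt.repr (e.symm (Submodule.Quotient.mk x)) st with hhdef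
    have hx := TT' x
    have step1 : (y : A) - ∑ st : T l × T l, h st • (ι (c l st.1 st.2)) ∈ NN R c Γ := by
      have hm := NN_iota c ι hiota hΓ _ hx
      have key : ι ((x : A) - ∑ st : T l × T l, h st • c l st.1 st.2)
          = (y : A) - ∑ st : T l × T l, h st • (ι (c l st.1 st.2)) := by
        rw [map_sub, map_sum, hy]
        congr 1
        refine Finset.sum_congr rfl fun st _ => ?_
        rw [map_smul]
      rwa [key] at hm
    have step2 : (y : A) - ∑ st : T l × T l, h st • c l st.2 st.1 ∈ NN R c Γ := by
      have hdiffmem : ∑ st : T l × T l,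
          h st • (ι (c l st.1 st.2) - c l st.2 st.1) ∈ NN R c Γ :=
        Submodule.sum_mem _ fun st _ =>
          Submodule.smul_mem _ _ (hHsub (hiota l st.1 st.2))
      have key : (y : A) - ∑ st : T l × T l, h st • c l st.2 st.1
          = ((y : A) - ∑ st : T l × T l, h st • (ι (c l st.1 st.2)))
            + ∑ st : T l × T l, h st • (ι (c l st.1 st.2) - c l st.2 st.1) := by
        simp only [smul_sub, Finset.sum_sub_distrib]
        abel
      rw [key]
      exact Submodule.add_mem _ step1 hdiffmem
    rw [sumJuggle3 h (fun u v => c l u v)] at step2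
    show e.symm (Submodule.Quotient.mk y)
      = (TensorProduct.comm R (T l → R) (T l → R)) (e.symm (Submodule.Quotient.mk x))
    rw [TT y _ step2]
    have hαx : e.symm (Submodule.Quotient.mk x) = ∑ st : T l × T l, h st • Bt st :=
      (Bt.sum_repr _).symm
    rw [hαx, map_sum]
    simp only [map_smul]
    have hmap : ∀ st : T l × T l,
        (TensorProduct.comm R (T l → R) (T l → R)) (Bt st) = Bt (st.2, st.1) := by
      rintro ⟨s, t⟩
      rw [hBt, Module.Basis.tensorProduct_apply, TensorProduct.comm_tmul, Module.Basis.tensorProduct_apply]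
    simp only [hmap]
    exact (sumJuggle3 h (fun u v => Bt (u, v))).symm

end Stmt18Aux

end Alpha



section Helpers2
variable {R : Type u} [CommRing R]

/-- If `p ≤ q` are submodules with `p` free finite and `q/p` isomorphic to a free finite
module `V`, then `q` is free finite of rank `rank p + rank V`. -/
theorem free_step [Nontrivial R] {Mo : Type u} [AddCommGroup Mo] [Module R Mo]
    {p q : Submodule R Mo} (hpq : p ≤ q) [Module.Free R p] [Module.Finite R p]
    {V : Type u} [AddCommGroup V] [Module R V] [Module.Free R V] [Module.Finite R V]
    (ee : (↥q ⧸ Submodule.comap q.subtype p) ≃ₗ[R] V) :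
    Module.Free R q ∧ Module.Finite R q ∧
      Module.finrank R q = Module.finrank R p + Module.finrank R V := by
  set pq : Submodule R ↥q := Submodule.comap q.subtype p with hpqdef
  haveI : Module.Free R (↥q ⧸ pq) := Module.Free.of_equiv ee.symm
  haveI : Module.Finite R (↥q ⧸ pq) := Module.Finite.equiv ee.symm
  haveI : Module.Free R ↥pq := Module.Free.of_equiv (Submodule.comapSubtypeEquivOfLe hpq).symm
  haveI : Module.Finite R ↥pq := Module.Finite.equiv (Submodule.comapSubtypeEquivOfLe hpq).symm
  obtain ⟨h, hh⟩ := Module.projective_lifting_property pq.mkQ LinearMap.id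
    (Submodule.mkQ_surjective pq)
  have hh' : ∀ z, pq.mkQ (h z) = z := fun z => by
    have := LinearMap.congr_fun hh z
    simpa using this
  have hmem : ∀ x : ↥q, x - h (pq.mkQ x) ∈ pq := by
    intro x
    have h0 : pq.mkQ (x - h (pq.mkQ x)) = 0 := by
      rw [map_sub, hh']
      simp
    rw [Submodule.mkQ_apply] at h0
    exact (Submodule.Quotient.mk_eq_zero pq).mp h0
  let F₁ : ↥q →ₗ[R] ↥pq :=
    (LinearMap.id - h ∘ₗ pq.mkQ).codRestrict pq hmem
  let F : ↥q →ₗ[R] ↥pq × (↥q ⧸ pq) := F₁.prod pq.mkQ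
  let G : ↥pq × (↥q ⧸ pq) →ₗ[R] ↥q := pq.subtype.coprod h
  have hGF : G.comp F = LinearMap.id := by
    apply LinearMap.ext
    intro x
    show (x - h (pq.mkQ x)) + h (pq.mkQ x) = x
    abel
  have hFG : F.comp G = LinearMap.id := by
    apply LinearMap.ext
    rintro ⟨y, z⟩
    have h1 : pq.mkQ ((y : ↥q) + h z) = z := by
      rw [map_add, hh']
      have : pq.mkQ (y : ↥q) = 0 := by
        rw [Submodule.mkQ_apply]
        exact (Submodule.Quotient.mk_eq_zero pq).mpr y.2
      rw [this, zero_add]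
    apply Prod.ext
    · apply Subtype.ext
      show ((y : ↥q) + h z) - h (pq.mkQ ((y : ↥q) + h z)) = (y : ↥q)
      rw [h1]
      abel
    · exact h1
  let E : ↥q ≃ₗ[R] ↥pq × (↥q ⧸ pq) := LinearEquiv.ofLinear F G hFG hGF
  haveI : Module.Free R q := Module.Free.of_equiv E.symm
  haveI : Module.Finite R q := Module.Finite.equiv E.symm
  refine ⟨inferInstance, inferInstance, ?_⟩
  rw [E.finrank_eq, Module.finrank_prod,
    (Submodule.comapSubtypeEquivOfLe hpq).finrank_eq, ee.finrank_eq]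

/-- A spanning family whose cardinality equals the finrank of a finite free module is
linearly independent. -/
theorem li_of_spanning [IsDomain R] {M : Type u} [AddCommGroup M] [Module R M]
    [Module.Free R M] [Module.Finite R M] {I : Type*} [Fintype I] (v : I → M)
    (hsp : Submodule.span R (Set.range v) = ⊤)
    (hcard : Fintype.card I = Module.finrank R M) :
    LinearIndependent R v := by
  classical
  set b := Module.Free.chooseBasis R M with hb
  have hcard2 : Fintype.card I = Fintype.card (Module.Free.ChooseBasisIndex R M) := by
    rw [hcard, Module.finrank_eq_card_chooseBasisIndex]
  set eI : I ≃ Module.Free.ChooseBasisIndex R M := Fintype.equivOfCardEq hcard2 with heI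
  set f : M →ₗ[R] M := b.constr R (fun j => v (eI.symm j)) with hf
  have hfb : ∀ i : I, f (b (eI i)) = v i := by
    intro i
    rw [hf, b.constr_basis, Equiv.symm_apply_apply]
  have hsurj : Function.Surjective f := by
    have hr : Submodule.span R (Set.range v) ≤ LinearMap.range f := by
      refine Submodule.span_le.mpr ?_
      rintro x ⟨i, rfl⟩
      exact ⟨b (eI i), hfb i⟩
    rw [hsp] at hr
    exact LinearMap.range_eq_top.mp (le_antisymm le_top hr)
  have hinj : Function.Injective f :=
    OrzechProperty.injective_of_surjective_endomorphism f hsurj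
  have hli0 : LinearIndependent R (fun i : I => b (eI i)) :=
    b.linearIndependent.comp eI eI.injective
  have : LinearIndependent R (f ∘ fun i : I => b (eI i)) :=
    hli0.map' f (LinearMap.ker_eq_bot.mpr hinj)
  have he : (f ∘ fun i : I => b (eI i)) = v := by
    funext i
    exact hfb i
  rwa [he] at this

end Helpers2


namespace Stmt18Aux
section Enum
variable (Λ : Type v) [Fintype Λ] [PartialOrder Λ]

noncomputable instance : Fintype (LinearExtension Λ) := show Fintype Λ from inferInstance

noncomputable def pidxE : Fin (Fintype.card Λ) ≃o LinearExtension Λ :=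
  Fintype.orderIsoFinOfCardEq (LinearExtension Λ) rfl

noncomputable def pidx : Λ → Fin (Fintype.card Λ) :=
  fun x => (pidxE Λ).symm (toLinearExtension x)

theorem pidx_mono {x y : Λ} (h : x ≤ y) : pidx Λ x ≤ pidx Λ y := by
  unfold pidx
  exact (pidxE Λ).symm.monotone (toLinearExtension.monotone h)

theorem pidx_inj : Function.Injective (pidx Λ) := by
  intro a b h
  unfold pidx at h
  have h2 := (pidxE Λ).symm.injective h
  exact h2

theorem pidx_bij : Function.Bijective (pidx Λ) :=
  (Fintype.bijective_iff_injective_and_card _).mpr ⟨pidx_inj Λ, by simp⟩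

noncomputable def pinv : Fin (Fintype.card Λ) → Λ :=
  (Equiv.ofBijective _ (pidx_bij Λ)).symm

theorem pidx_pinv (j : Fin (Fintype.card Λ)) : pidx Λ (pinv Λ j) = j :=
  (Equiv.ofBijective _ (pidx_bij Λ)).apply_symm_apply j

def GammaSet (k : ℕ) : Set Λ := {x | Fintype.card Λ - k ≤ (pidx Λ x : ℕ)}

theorem GammaSet_zero : GammaSet Λ 0 = ∅ := by
  ext x
  simp only [GammaSet, Set.mem_setOf_eq, Set.mem_empty_iff_false, iff_false, not_le,
    Nat.sub_zero]
  exact (pidx Λ x).is_lt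

theorem GammaSet_top : GammaSet Λ (Fintype.card Λ) = Set.univ := by
  ext x
  simp [GammaSet]

theorem GammaSet_upper (k : ℕ) : IsUpperSet (GammaSet Λ k) := by
  intro x y hxy hx
  have hx' : Fintype.card Λ - k ≤ (pidx Λ x : ℕ) := hx
  have h2 : (pidx Λ x : ℕ) ≤ (pidx Λ y : ℕ) := pidx_mono Λ hxy
  exact le_trans hx' h2

theorem GammaSet_subset (k : ℕ) : GammaSet Λ k ⊆ GammaSet Λ (k + 1) := by
  intro x hx
  simp only [GammaSet, Set.mem_setOf_eq] at *
  omega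

theorem GammaSet_diff {k : ℕ} (hk : k < Fintype.card Λ) :
    GammaSet Λ (k + 1) \ GammaSet Λ k
      = {pinv Λ ⟨Fintype.card Λ - (k + 1), by omega⟩} := by
  ext x
  simp only [GammaSet, Set.mem_diff, Set.mem_setOf_eq, Set.mem_singleton_iff, not_le]
  constructor
  · rintro ⟨h1, h2⟩
    have he : pidx Λ x = ⟨Fintype.card Λ - (k + 1), by omega⟩ := by
      apply Fin.ext
      simp only
      omega
    have := congrArg (pinv Λ) he
    rwa [show pinv Λ (pidx Λ x) = x from
      (Equiv.ofBijective _ (pidx_bij Λ)).symm_apply_apply x] at this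
  · rintro rfl
    rw [pidx_pinv]
    simp only
    omega

end Enum
end Stmt18Aux


namespace Stmt18Aux

theorem dir2 {R A : Type u} [CommRing R] [IsDomain R] [Ring A] [Algebra R A]
    {Λ : Type v} [Fintype Λ] [PartialOrder Λ]
    (ι : A →ₗ[R] A)
    (N : Set Λ → Submodule R A)
    (hideal : ∀ Γ : Set Λ, IsUpperSet Γ → ∀ a : A, ∀ x ∈ N Γ,
      a * x ∈ N Γ ∧ x * a ∈ N Γ ∧ ι x ∈ N Γ)
    (hempty : N ∅ = ⊥)
    (hmono : ∀ Γ₁ Γ₂ : Set Λ, IsUpperSet Γ₁ → IsUpperSet Γ₂ → Γ₁ ⊆ Γ₂ → N Γ₁ ≤ N Γ₂)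
    (htop : (⨆ μ : Λ, N (Set.Ici μ)) = ⊤)
    (hIoi : ∀ l : Λ, N (Set.Ioi l) = ⨆ μ ∈ Set.Ioi l, N (Set.Ici μ))
    (hW : ∀ l : Λ, ∃ W : ModWithAction R A,
      Module.Finite R W.M ∧ Module.Free R W.M ∧
      ∀ Γ Γ' : Set Λ, IsUpperSet Γ → IsUpperSet Γ' → Γ ⊆ Γ' → Γ' \ Γ = {l} →
        ∃ α : (↥(N Γ') ⧸ Submodule.comap (N Γ').subtype (N Γ)) ≃ₗ[R]
            TensorProduct R W.M W.M,
          (∀ (a : A) (x y : ↥(N Γ')), (y : A) = a * (x : A) →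
            α (Submodule.Quotient.mk y)
              = TensorProduct.map (W.ρ a) LinearMap.id (α (Submodule.Quotient.mk x))) ∧
          (∀ (a : A) (x y : ↥(N Γ')), (y : A) = (x : A) * a →
            α (Submodule.Quotient.mk y)
              = TensorProduct.map LinearMap.id (W.ρ (ι a)) (α (Submodule.Quotient.mk x))) ∧
          (∀ x y : ↥(N Γ'), (y : A) = ι (x : A) →
            α (Submodule.Quotient.mk y)
              = TensorProduct.comm R W.M W.M (α (Submodule.Quotient.mk x)))) :
    ∃ (T : Λ → Type u) (ft : ∀ l, Fintype (T l)) (c : ∀ l : Λ, T l → T l → A),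
      LinearIndependent R (fun p : Σ l : Λ, T l × T l => c p.1 p.2.1 p.2.2) ∧
      Submodule.span R (Set.range fun p : Σ l : Λ, T l × T l => c p.1 p.2.1 p.2.2) = ⊤ ∧
      (∀ (l : Λ) (s : T l) (a : A), ∃ r : T l → R, ∀ t : T l,
        a * c l s t - (@Finset.univ (T l) (ft l)).sum (fun v => r v • c l v t) ∈
          Submodule.span R {x | ∃ μ, l < μ ∧ ∃ u v, x = c μ u v}) ∧
      (∀ (l : Λ) (s t : T l),
        ι (c l s t) - c l t s ∈ Submodule.span R {x | ∃ μ, l < μ ∧ ∃ u v, x = c μ u v}) := by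
  classical
  choose W hWfin hWfree hWiso using hW
  haveI : ∀ l, Module.Finite R (W l).M := hWfin
  haveI : ∀ l, Module.Free R (W l).M := hWfree
  set T : Λ → Type u := fun l => Module.Free.ChooseBasisIndex R (W l).M with hT
  have ft : ∀ l, Fintype (T l) := fun l => inferInstance
  set B : ∀ l, Module.Basis (T l) R (W l).M := fun l => Module.Free.chooseBasis R (W l).M with hB
  set Bt : ∀ l, Module.Basis (T l × T l) R ((W l).M ⊗[R] (W l).M) :=
    fun l => (B l).tensorProduct (B l) with hBt
  have hdiffIci : ∀ l : Λ, Set.Ici l \ Set.Ioi l = {l} := by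
    intro l
    ext x
    simp only [Set.mem_diff, Set.mem_Ici, Set.mem_Ioi, Set.mem_singleton_iff]
    constructor
    · rintro ⟨h1, h2⟩
      rcases eq_or_lt_of_le h1 with h | h
      · exact h.symm
      · exact absurd h h2
    · rintro rfl
      exact ⟨le_rfl, lt_irrefl x⟩
  have hAex := fun l => hWiso l (Set.Ioi l) (Set.Ici l) (isUpperSet_Ioi l)
    (isUpperSet_Ici l) Set.Ioi_subset_Ici_self (hdiffIci l)
  choose αl hα1 hα2 hα3 using hAex
  have hcelex : ∀ (l : Λ) (st : T l × T l), ∃ x : ↥(N (Set.Ici l)),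
      Submodule.Quotient.mk x = (αl l).symm (Bt l st) :=
    fun l st => Submodule.Quotient.mk_surjective _ _
  choose cel hcel using hcelex
  set c : ∀ l : Λ, T l → T l → A := fun l s t => ((cel l (s, t) : ↥(N (Set.Ici l))) : A)
    with hc
  have F1 : ∀ (l : Λ) (st : T l × T l),
      αl l (Submodule.Quotient.mk (cel l st)) = Bt l st := by
    intro l st
    rw [hcel]
    exact (αl l).apply_symm_apply _
  have F2 : ∀ (l : Λ) (x y : ↥(N (Set.Ici l))),
      αl l (Submodule.Quotient.mk x) = αl l (Submodule.Quotient.mk y) →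
      (x : A) - (y : A) ∈ N (Set.Ioi l) := by
    intro l x y h
    have h2 : (Submodule.Quotient.mk x : _ ⧸ _) = Submodule.Quotient.mk y :=
      (αl l).injective h
    have h3 := (Submodule.Quotient.eq
      (Submodule.comap (N (Set.Ici l)).subtype (N (Set.Ioi l)))).mp h2
    exact h3
  -- the span submodules
  set SP : Λ → Submodule R A :=
    fun ν => Submodule.span R {x | ∃ κ, ν ≤ κ ∧ ∃ u v, x = c κ u v} with hSP
  have cmemSP : ∀ {ν κ : Λ}, ν ≤ κ → ∀ u v, c κ u v ∈ SP ν :=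
    fun h u v => Submodule.subset_span ⟨_, h, u, v, rfl⟩
  have SPmono : ∀ {ν ν' : Λ}, ν ≤ ν' → SP ν' ≤ SP ν := by
    intro ν ν' h
    refine Submodule.span_le.mpr ?_
    rintro x ⟨κ, hκ, u, v, rfl⟩
    exact cmemSP (le_trans h hκ) u v
  -- mk of sums
  have mksum : ∀ (l : Λ) (h : T l × T l → R),
      αl l (Submodule.Quotient.mk (∑ st : T l × T l, h st • cel l st))
        = ∑ st : T l × T l, h st • Bt l st := by
    intro l h
    rw [← Submodule.mkQ_apply, map_sum, map_sum]
    refine Finset.sum_congr rfl fun st _ => ?_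
    rw [map_smul, map_smul, Submodule.mkQ_apply, F1]
  have celsum : ∀ (l : Λ) (h : T l × T l → R),
      ((∑ st : T l × T l, h st • cel l st : ↥(N (Set.Ici l))) : A)
        = ∑ st : T l × T l, h st • c l st.1 st.2 := by
    intro l h
    simp [hc]
  -- key filtration lemma
  haveI : WellFoundedGT Λ := inferInstance
  have K : ∀ ν : Λ, N (Set.Ici ν) ≤ SP ν := by
    intro ν
    refine (wellFounded_gt).induction (C := fun ν => N (Set.Ici ν) ≤ SP ν) ν ?_
    intro ν IH x hx
    set z := αl ν (Submodule.Quotient.mk ⟨x, hx⟩) with hz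
    set h : T ν × T ν → R := fun st => (Bt ν).repr z st with hh
    have hzz : z = ∑ st : T ν × T ν, h st • Bt ν st := ((Bt ν).sum_repr z).symm
    have hmem := F2 ν ⟨x, hx⟩ (∑ st : T ν × T ν, h st • cel ν st)
      (by rw [mksum ν h]; exact hzz)
    rw [celsum ν h] at hmem
    have hNIoi : N (Set.Ioi ν) ≤ SP ν := by
      rw [hIoi ν]
      refine iSup_le fun μ => iSup_le fun hμ => ?_
      exact le_trans (IH μ hμ) (SPmono (le_of_lt hμ))
    have hx2 : x = (x - ∑ st : T ν × T ν, h st • c ν st.1 st.2)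
        + ∑ st : T ν × T ν, h st • c ν st.1 st.2 := by abel
    rw [hx2]
    refine Submodule.add_mem _ (hNIoi hmem) ?_
    exact Submodule.sum_mem _ fun st _ => Submodule.smul_mem _ _ (cmemSP le_rfl st.1 st.2)
  have cor : ∀ l : Λ, N (Set.Ioi l)
      ≤ Submodule.span R {x | ∃ μ, l < μ ∧ ∃ u v, x = c μ u v} := by
    intro l
    rw [hIoi l]
    refine iSup_le fun μ => iSup_le fun hμ => le_trans (K μ) ?_
    refine Submodule.span_le.mpr ?_
    rintro x ⟨κ, hκ, u, v, rfl⟩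
    exact Submodule.subset_span ⟨κ, lt_of_lt_of_le hμ hκ, u, v, rfl⟩
  have hspanTop : Submodule.span R
      (Set.range fun p : Σ l : Λ, T l × T l => c p.1 p.2.1 p.2.2) = ⊤ := by
    refine le_antisymm le_top ?_
    rw [← htop]
    refine iSup_le fun μ => le_trans (K μ) ?_
    refine Submodule.span_le.mpr ?_
    rintro x ⟨κ, hκ, u, v, rfl⟩
    exact Submodule.subset_span ⟨⟨κ, u, v⟩, rfl⟩
  refine ⟨T, ft, c, ?_, ?_, ?_, ?_⟩
  · -- linear independence, by rank counting
    set d : Λ → ℕ := fun l => Fintype.card (T l) with hd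
    have hfrT : ∀ l, Module.finrank R ((W l).M ⊗[R] (W l).M) = d l * d l := by
      intro l
      rw [Module.finrank_eq_card_basis (Bt l), Fintype.card_prod]
    have hchain : ∀ k : ℕ, k ≤ Fintype.card Λ →
        Module.Free R ↥(N (GammaSet Λ k)) ∧ Module.Finite R ↥(N (GammaSet Λ k)) ∧
          Module.finrank R ↥(N (GammaSet Λ k))
            = ∑ x : Λ, (if x ∈ GammaSet Λ k then d x * d x else 0) := by
      intro k
      induction k with
      | zero =>
        intro _
        rw [GammaSet_zero, hempty]
        refine ⟨inferInstance, inferInstance, ?_⟩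
        rw [finrank_bot]
        symm
        refine Finset.sum_eq_zero fun x _ => ?_
        simp
      | succ k IH =>
        intro hk1
        have hk : k < Fintype.card Λ := hk1
        obtain ⟨Fp, Fin, Frk⟩ := IH (le_of_lt hk)
        set l : Λ := pinv Λ ⟨Fintype.card Λ - (k + 1), by omega⟩ with hl
        have hdiff : GammaSet Λ (k + 1) \ GammaSet Λ k = {l} := GammaSet_diff Λ hk
        obtain ⟨α', -, -, -⟩ := hWiso l (GammaSet Λ k) (GammaSet Λ (k + 1))
          (GammaSet_upper Λ k) (GammaSet_upper Λ (k + 1)) (GammaSet_subset Λ k) hdiff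
        have hle : N (GammaSet Λ k) ≤ N (GammaSet Λ (k + 1)) :=
          hmono _ _ (GammaSet_upper Λ k) (GammaSet_upper Λ (k + 1)) (GammaSet_subset Λ k)
        haveI := Fp
        haveI := Fin
        obtain ⟨Fr1, Fr2, Fr3⟩ := free_step hle α'
        refine ⟨Fr1, Fr2, ?_⟩
        rw [Fr3, Frk, hfrT l]
        have hlin : l ∈ GammaSet Λ (k + 1) ∧ l ∉ GammaSet Λ k := by
          have hx : l ∈ GammaSet Λ (k + 1) \ GammaSet Λ k := by rw [hdiff]; exact rfl
          exact ⟨hx.1, hx.2⟩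
        have hmemiff : ∀ x : Λ, x ≠ l → (x ∈ GammaSet Λ (k + 1) ↔ x ∈ GammaSet Λ k) := by
          intro x hx
          constructor
          · intro h1
            by_contra h2
            have hm : x ∈ GammaSet Λ (k + 1) \ GammaSet Λ k := ⟨h1, h2⟩
            rw [hdiff] at hm
            exact hx hm
          · intro h1
            exact GammaSet_subset Λ k h1
        have hpt : ∀ x : Λ, (if x ∈ GammaSet Λ (k + 1) then d x * d x else 0)
            = (if x ∈ GammaSet Λ k then d x * d x else 0)
              + (if x = l then d x * d x else 0) := by
          intro x
          by_cases hx : x = l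
          · subst hx
            rw [if_pos hlin.1, if_neg hlin.2, if_pos rfl, zero_add]
          · rw [if_neg hx, add_zero]
            by_cases h2 : x ∈ GammaSet Λ k
            · rw [if_pos ((hmemiff x hx).mpr h2), if_pos h2]
            · rw [if_neg (fun hh => h2 ((hmemiff x hx).mp hh)), if_neg h2]
        rw [Finset.sum_congr rfl (fun x _ => hpt x), Finset.sum_add_distrib,
          Finset.sum_ite_eq' Finset.univ l (fun x => d x * d x)]
        simp
    obtain ⟨FA, FiA, FrA⟩ := hchain (Fintype.card Λ) le_rfl
    have hNuniv : N Set.univ = ⊤ := by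
      refine le_antisymm le_top ?_
      rw [← htop]
      exact iSup_le fun μ => hmono _ _ (isUpperSet_Ici μ) isUpperSet_univ (Set.subset_univ _)
    rw [GammaSet_top, hNuniv] at FA FiA FrA
    haveI := FA
    haveI := FiA
    haveI : Module.Free R A := Module.Free.of_equiv (Submodule.topEquiv (R := R) (M := A))
    haveI : Module.Finite R A := Module.Finite.equiv (Submodule.topEquiv (R := R) (M := A))
    have hfrA : Module.finrank R A = ∑ x : Λ, d x * d x := by
      rw [← (Submodule.topEquiv (R := R) (M := A)).finrank_eq, FrA]
      refine Finset.sum_congr rfl fun x _ => ?_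
      simp
    have hcard : Fintype.card (Σ l : Λ, T l × T l) = Module.finrank R A := by
      rw [Fintype.card_sigma, hfrA]
      refine Finset.sum_congr rfl fun x _ => ?_
      rw [Fintype.card_prod]
    exact li_of_spanning _ hspanTop hcard
  · -- spanning
    exact hspanTop
  · -- left multiplication
    intro l s a
    refine ⟨fun w => (B l).repr ((W l).ρ a (B l s)) w, fun t => ?_⟩
    have hymem : a * c l s t ∈ N (Set.Ici l) :=
      (hideal (Set.Ici l) (isUpperSet_Ici l) a _ (cel l (s, t)).2).1
    set y : ↥(N (Set.Ici l)) := ⟨a * c l s t, hymem⟩ with hy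
    have hcond := hα1 l a (cel l (s, t)) y rfl
    rw [F1 l (s, t)] at hcond
    have hmap : TensorProduct.map ((W l).ρ a) LinearMap.id (Bt l (s, t))
        = ∑ w, ((B l).repr ((W l).ρ a (B l s)) w) • Bt l (w, t) := by
      rw [hBt]
      simp only
      rw [Module.Basis.tensorProduct_apply, TensorProduct.map_tmul]
      have : ((W l).ρ a) (B l s) = ∑ w, ((B l).repr ((W l).ρ a (B l s)) w) • B l w :=
        ((B l).sum_repr _).symm
      rw [this, TensorProduct.sum_tmul]
      refine Finset.sum_congr rfl fun w _ => ?_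
      rw [← TensorProduct.smul_tmul']
      simp [Module.Basis.tensorProduct_apply]
    rw [hmap] at hcond
    have hcond2 : αl l (Submodule.Quotient.mk y)
        = αl l (Submodule.Quotient.mk
            (∑ st : T l × T l, (fun st : T l × T l =>
              if st.2 = t then ((B l).repr ((W l).ρ a (B l s)) st.1) else 0) st • cel l st)) := by
      rw [mksum, hcond]
      rw [Fintype.sum_prod_type]
      refine Finset.sum_congr rfl fun w _ => ?_
      simp only [ite_smul, zero_smul]
      rw [Finset.sum_ite_eq' Finset.univ t
        (fun t' => ((B l).repr ((W l).ρ a (B l s)) w) • Bt l (w, t'))]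
      simp
    have hmem := F2 l y _ hcond2
    rw [celsum] at hmem
    have hsimp : ∑ st : T l × T l, (fun st : T l × T l =>
        if st.2 = t then ((B l).repr ((W l).ρ a (B l s)) st.1) else 0) st • c l st.1 st.2
        = ∑ w, ((B l).repr ((W l).ρ a (B l s)) w) • c l w t := by
      rw [Fintype.sum_prod_type]
      refine Finset.sum_congr rfl fun w _ => ?_
      simp only [ite_smul, zero_smul]
      rw [Finset.sum_ite_eq' Finset.univ t
        (fun t' => ((B l).repr ((W l).ρ a (B l s)) w) • c l w t')]
      simp
    rw [hsimp] at hmem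
    exact cor l hmem
  · -- involution
    intro l s t
    have hymem : ι (c l s t) ∈ N (Set.Ici l) :=
      (hideal (Set.Ici l) (isUpperSet_Ici l) 0 _ (cel l (s, t)).2).2.2
    set y : ↥(N (Set.Ici l)) := ⟨ι (c l s t), hymem⟩ with hy
    have hcond := hα3 l (cel l (s, t)) y rfl
    rw [F1 l (s, t)] at hcond
    have hcomm : (TensorProduct.comm R (W l).M (W l).M) (Bt l (s, t)) = Bt l (t, s) := by
      rw [hBt]
      simp only
      rw [Module.Basis.tensorProduct_apply, TensorProduct.comm_tmul, Module.Basis.tensorProduct_apply]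
    rw [hcomm, ← F1 l (t, s)] at hcond
    have hmem := F2 l y (cel l (t, s)) hcond
    exact cor l hmem
end Stmt18Aux



/-- Let `A` be an algebra over an integral domain `R` with involution `ι`, and let `Λ` be
a finite partially ordered set.  Then `A` has a (weak Graham–Lehrer) cell datum with
partially ordered set `Λ` if and only if `A` has a `Λ`-cell net: a family
`Γ ↦ A_Γ` of `ι`-invariant two-sided ideals indexed by the order ideals (here: upper
sets) of `Λ`, with `A_∅ = 0`, monotone, such that `A` is spanned by the `A_{≥μ}` and
`A_{>λ}` is spanned by the `A_{≥μ}` with `μ > λ`, and such that for each `λ` there is an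
`A`-module `M^λ`, finitely generated free over `R`, with `A`-`A`-bimodule isomorphisms
`A_{Γ'}/A_Γ ≅ M^λ ⊗_R i(M^λ)` commuting with the involutions whenever `Γ ⊆ Γ'` are
order ideals with `Γ' \ Γ = {λ}`. -/
theorem stmt_18 {R A : Type u} [CommRing R] [IsDomain R] [Ring A] [Algebra R A]
    (Λ : Type v) [Fintype Λ] [PartialOrder Λ]
    (ι : A →ₗ[R] A) (hanti : ∀ a b, ι (a * b) = ι b * ι a) (hone : ι 1 = 1)
    (hinvol : ∀ a, ι (ι a) = a) :
    (∃ (T : Λ → Type u) (ft : ∀ l, Fintype (T l)) (c : ∀ l : Λ, T l → T l → A),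
      LinearIndependent R (fun p : Σ l : Λ, T l × T l => c p.1 p.2.1 p.2.2) ∧
      Submodule.span R (Set.range fun p : Σ l : Λ, T l × T l => c p.1 p.2.1 p.2.2) = ⊤ ∧
      (∀ (l : Λ) (s : T l) (a : A), ∃ r : T l → R, ∀ t : T l,
        a * c l s t - (@Finset.univ (T l) (ft l)).sum (fun v => r v • c l v t) ∈
          Submodule.span R {x | ∃ μ, l < μ ∧ ∃ u v, x = c μ u v}) ∧
      (∀ (l : Λ) (s t : T l),
        ι (c l s t) - c l t s ∈ Submodule.span R {x | ∃ μ, l < μ ∧ ∃ u v, x = c μ u v}))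
    ↔
    (∃ N : Set Λ → Submodule R A,
      (∀ Γ : Set Λ, IsUpperSet Γ → ∀ a : A, ∀ x ∈ N Γ,
        a * x ∈ N Γ ∧ x * a ∈ N Γ ∧ ι x ∈ N Γ) ∧
      N ∅ = ⊥ ∧
      (∀ Γ₁ Γ₂ : Set Λ, IsUpperSet Γ₁ → IsUpperSet Γ₂ → Γ₁ ⊆ Γ₂ → N Γ₁ ≤ N Γ₂) ∧
      (⨆ μ : Λ, N (Set.Ici μ)) = ⊤ ∧
      (∀ l : Λ, N (Set.Ioi l) = ⨆ μ ∈ Set.Ioi l, N (Set.Ici μ)) ∧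
      (∀ l : Λ, ∃ W : ModWithAction R A,
        Module.Finite R W.M ∧ Module.Free R W.M ∧
        ∀ Γ Γ' : Set Λ, IsUpperSet Γ → IsUpperSet Γ' → Γ ⊆ Γ' → Γ' \ Γ = {l} →
          ∃ α : (↥(N Γ') ⧸ Submodule.comap (N Γ').subtype (N Γ)) ≃ₗ[R]
              TensorProduct R W.M W.M,
            (∀ (a : A) (x y : ↥(N Γ')), (y : A) = a * (x : A) →
              α (Submodule.Quotient.mk y)
                = TensorProduct.map (W.ρ a) LinearMap.id (α (Submodule.Quotient.mk x))) ∧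
            (∀ (a : A) (x y : ↥(N Γ')), (y : A) = (x : A) * a →
              α (Submodule.Quotient.mk y)
                = TensorProduct.map LinearMap.id (W.ρ (ι a)) (α (Submodule.Quotient.mk x))) ∧
            (∀ x y : ↥(N Γ'), (y : A) = ι (x : A) →
              α (Submodule.Quotient.mk y)
                = TensorProduct.comm R W.M W.M (α (Submodule.Quotient.mk x))))) := by
  constructor
  · rintro ⟨T, ft, c, hli, hspan, hmul0, hiota0⟩
    letI : ∀ l, Fintype (T l) := ft
    have hli' : LinearIndependent R (Stmt18Aux.cc c) := hli
    have hmul : ∀ (l : Λ) (s : T l) (a : A), ∃ r : T l → R, ∀ t : T l,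
        a * c l s t - ∑ v, r v • c l v t ∈ Stmt18Aux.NN R c (Set.Ioi l) := by
      intro l s a
      obtain ⟨r, hr⟩ := hmul0 l s a
      refine ⟨r, fun t => ?_⟩
      rw [← Stmt18Aux.Hset R c l]
      exact hr t
    have hiota : ∀ (l : Λ) (s t : T l),
        ι (c l s t) - c l t s ∈ Stmt18Aux.NN R c (Set.Ioi l) := by
      intro l s t
      rw [← Stmt18Aux.Hset R c l]
      exact hiota0 l s t
    refine ⟨fun Γ => Stmt18Aux.NN R c Γ, ?_, ?_, ?_, ?_, ?_, ?_⟩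
    · intro Γ hΓ a x hx
      exact ⟨Stmt18Aux.NN_mul_left c hmul hΓ a x hx,
        Stmt18Aux.NN_mul_right c ι hanti hinvol hmul hiota hΓ a x hx,
        Stmt18Aux.NN_iota c ι hiota hΓ x hx⟩
    · exact Stmt18Aux.NN_empty c
    · intro Γ₁ Γ₂ _ _ h
      exact Stmt18Aux.NN_mono c h
    · exact Stmt18Aux.NN_iSup_top c hspan
    · exact fun l => Stmt18Aux.NN_Ioi_eq c l
    · exact fun l => Stmt18Aux.exists_W1 hli' hanti hinvol hmul hiota l
  · rintro ⟨N, hideal, hempty, hmono, htop, hIoi, hW⟩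
    exact Stmt18Aux.dir2 ι N hideal hempty hmono htop hIoi hW
end
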